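/- Let G be a graph, u ∈ V(G), and A ⊆ V(G − u). Suppose there exist k independent paths in G from u to distinct vertices a1, ..., ak ∈ A, respectively, each meeting A only in its end in A. Then for any n ≥ k, if there exist n independent paths P1, ..., Pn in G from u to n distinct vertices of A, each meeting A only in its end in A, then P1, ..., Pn may be chosen so that a_i ∈ V(P_i) for each i ∈ {1, ..., k}. -/

import Mathlib

open SimpleGraph

open Classical in
section

namespace KSAux

variable {V : Type*}

/-- Nodes of the auxiliary digraph. -/
abbrev N (V : Type*) := Option (Option (V × Bool))

def src : N V := none
def snk : N V := some none
def inN (v : V) : N V := some (some (v, false))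
def outN (v : V) : N V := some (some (v, true))

@[simp] lemma src_ne_snk : (src : N V) ≠ snk := by simp [src, snk]
@[simp] lemma inN_inj {v w : V} : inN v = inN w ↔ v = w := by simp [inN]
@[simp] lemma outN_inj {v w : V} : outN v = outN w ↔ v = w := by simp [outN]
@[simp] lemma inN_ne_outN {v w : V} : inN v ≠ outN w := by simp [inN, outN]
@[simp] lemma outN_ne_inN {v w : V} : outN v ≠ inN w := by simp [inN, outN]
@[simp] lemma src_ne_inN {v : V} : (src : N V) ≠ inN v := by simp [src, inN]
@[simp] lemma src_ne_outN {v : V} : (src : N V) ≠ outN v := by simp [src, outN]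
@[simp] lemma snk_ne_inN {v : V} : (snk : N V) ≠ inN v := by simp [snk, inN]
@[simp] lemma snk_ne_outN {v : V} : (snk : N V) ≠ outN v := by simp [snk, outN]
@[simp] lemma inN_ne_src {v : V} : (inN v : N V) ≠ src := by simp [src, inN]
@[simp] lemma outN_ne_src {v : V} : (outN v : N V) ≠ src := by simp [src, outN]
@[simp] lemma inN_ne_snk {v : V} : (inN v : N V) ≠ snk := by simp [snk, inN]
@[simp] lemma outN_ne_snk {v : V} : (outN v : N V) ≠ snk := by simp [snk, outN]
@[simp] lemma snk_ne_src : (snk : N V) ≠ src := by simp [src, snk]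

/-- Arcs of the auxiliary digraph. -/
def IsArc (G : SimpleGraph V) (u : V) (A : Set V) : N V → N V → Prop
  | none, some (some (v, false)) => G.Adj u v
  | some (some (v, false)), some (some (w, true)) => v = w ∧ v ≠ u
  | some (some (v, true)), some (some (w, false)) => G.Adj v w ∧ v ∉ A ∧ v ≠ u ∧ w ≠ u
  | some (some (v, true)), some none => v ∈ A
  | _, _ => False

variable {G : SimpleGraph V} {u : V} {A : Set V}

lemma isArc_src_iff {y : N V} : IsArc G u A src y ↔ ∃ v, y = inN v ∧ G.Adj u v := by
  constructor
  · intro h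
    match y, h with
    | some (some (v, false)), h => exact ⟨v, rfl, h⟩
  · rintro ⟨v, rfl, h⟩; exact h

lemma isArc_inN_iff {v : V} {y : N V} : IsArc G u A (inN v) y ↔ y = outN v ∧ v ≠ u := by
  constructor
  · intro h
    match y, h with
    | some (some (w, true)), h => exact ⟨by simp [outN, h.1], h.2⟩
  · rintro ⟨rfl, h⟩; exact ⟨rfl, h⟩

lemma isArc_outN_iff {v : V} {y : N V} :
    IsArc G u A (outN v) y ↔ (y = snk ∧ v ∈ A) ∨
      (∃ w, y = inN w ∧ G.Adj v w ∧ v ∉ A ∧ v ≠ u ∧ w ≠ u) := by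
  constructor
  · intro h
    match y, h with
    | some none, h => exact Or.inl ⟨rfl, h⟩
    | some (some (w, false)), h => exact Or.inr ⟨w, rfl, h⟩
  · rintro (⟨rfl, h⟩ | ⟨w, rfl, h⟩) <;> exact h

lemma not_isArc_snk {y : N V} : ¬ IsArc G u A snk y := by
  intro h; match y, h with
  | _, h => exact h

lemma not_isArc_to_src {x : N V} : ¬ IsArc G u A x src := by
  intro h
  match x, h with
  | none, h => exact h
  | some none, h => exact h
  | some (some (v, false)), h => exact h
  | some (some (v, true)), h => exact h

open scoped Classical

noncomputable def outdeg (F : Finset (N V × N V)) (z : N V) : ℕ :=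
  (F.filter (fun p => p.1 = z)).card
noncomputable def indeg (F : Finset (N V × N V)) (z : N V) : ℕ :=
  (F.filter (fun p => p.2 = z)).card

variable {F : Finset (N V × N V)} {z : N V}

lemma outdeg_pos_iff : 0 < outdeg F z ↔ ∃ y, (z, y) ∈ F := by
  simp only [outdeg, Finset.card_pos, Finset.Nonempty, Finset.mem_filter]
  constructor
  · rintro ⟨⟨a, b⟩, h, rfl⟩; exact ⟨b, h⟩
  · rintro ⟨y, h⟩; exact ⟨(z, y), h, rfl⟩

lemma indeg_pos_iff : 0 < indeg F z ↔ ∃ x, (x, z) ∈ F := by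
  simp only [indeg, Finset.card_pos, Finset.Nonempty, Finset.mem_filter]
  constructor
  · rintro ⟨⟨a, b⟩, h, rfl⟩; exact ⟨a, h⟩
  · rintro ⟨y, h⟩; exact ⟨(y, z), h, rfl⟩

lemma outdeg_eq_zero_iff : outdeg F z = 0 ↔ ∀ y, (z, y) ∉ F := by
  constructor
  · intro h y hy
    have := outdeg_pos_iff.2 ⟨y, hy⟩; omega
  · intro h
    by_contra hne
    obtain ⟨y, hy⟩ := outdeg_pos_iff.1 (Nat.pos_of_ne_zero hne)
    exact h y hy

lemma indeg_eq_zero_iff : indeg F z = 0 ↔ ∀ x, (x, z) ∉ F := by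
  constructor
  · intro h x hx
    have := indeg_pos_iff.2 ⟨x, hx⟩; omega
  · intro h
    by_contra hne
    obtain ⟨x, hx⟩ := indeg_pos_iff.1 (Nat.pos_of_ne_zero hne)
    exact h x hx

lemma outdeg_erase (p : N V × N V) :
    outdeg (F.erase p) z = ((F.filter (fun q => q.1 = z)).erase p).card := by
  simp [outdeg, Finset.filter_erase]

lemma indeg_erase (p : N V × N V) :
    indeg (F.erase p) z = ((F.filter (fun q => q.2 = z)).erase p).card := by
  simp [indeg, Finset.filter_erase]

lemma outdeg_erase_of_ne {p : N V × N V} (h : p.1 ≠ z) :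
    outdeg (F.erase p) z = outdeg F z := by
  rw [outdeg_erase, Finset.erase_eq_of_notMem, outdeg]
  simp only [Finset.mem_filter]; rintro ⟨-, h'⟩; exact h h'

lemma indeg_erase_of_ne {p : N V × N V} (h : p.2 ≠ z) :
    indeg (F.erase p) z = indeg F z := by
  rw [indeg_erase, Finset.erase_eq_of_notMem, indeg]
  simp only [Finset.mem_filter]; rintro ⟨-, h'⟩; exact h h'

lemma outdeg_erase_of_mem {p : N V × N V} (hp : p ∈ F) (h : p.1 = z) :
    outdeg (F.erase p) z = outdeg F z - 1 := by
  rw [outdeg_erase, Finset.card_erase_of_mem (by simp [Finset.mem_filter, hp, h]), outdeg]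

lemma indeg_erase_of_mem {p : N V × N V} (hp : p ∈ F) (h : p.2 = z) :
    indeg (F.erase p) z = indeg F z - 1 := by
  rw [indeg_erase, Finset.card_erase_of_mem (by simp [Finset.mem_filter, hp, h]), indeg]

lemma outdeg_insert_of_ne {p : N V × N V} (h : p.1 ≠ z) :
    outdeg (insert p F) z = outdeg F z := by
  rw [outdeg, Finset.filter_insert, if_neg (by simpa using h)]; rfl

lemma indeg_insert_of_ne {p : N V × N V} (h : p.2 ≠ z) :
    indeg (insert p F) z = indeg F z := by
  rw [indeg, Finset.filter_insert, if_neg (by simpa using h)]; rfl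

lemma outdeg_insert_of_eq {p : N V × N V} (hp : p ∉ F) (h : p.1 = z) :
    outdeg (insert p F) z = outdeg F z + 1 := by
  rw [outdeg, Finset.filter_insert, if_pos h, Finset.card_insert_of_notMem (by simp [Finset.mem_filter]; intro hm; exact absurd hm hp)]; rfl

lemma indeg_insert_of_eq {p : N V × N V} (hp : p ∉ F) (h : p.2 = z) :
    indeg (insert p F) z = indeg F z + 1 := by
  rw [indeg, Finset.filter_insert, if_pos h, Finset.card_insert_of_notMem (by simp [Finset.mem_filter]; intro hm; exact absurd hm hp)]; rfl


def Valid (G : SimpleGraph V) (u : V) (A : Set V) (F : Finset (N V × N V)) : Prop :=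
  ∀ p ∈ F, IsArc G u A p.1 p.2

def Conserv (F : Finset (N V × N V)) : Prop :=
  ∀ z : N V, z ≠ src → z ≠ snk → outdeg F z = indeg F z

variable {F : Finset (N V × N V)}

lemma Valid.mem_of_out_inN (hF : Valid G u A F) {v : V} {y : N V} (h : (inN v, y) ∈ F) :
    y = outN v ∧ v ≠ u :=
  isArc_inN_iff.1 (hF _ h)

lemma Valid.mem_of_in_outN (hF : Valid G u A F) {v : V} {x : N V} (h : (x, outN v) ∈ F) :
    x = inN v := by
  have h' := hF _ h
  match x, h' with
  | none, h' =>
    obtain ⟨w, hw, -⟩ := isArc_src_iff.1 h'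
    exact absurd hw.symm (by simp)
  | some none, h' => exact absurd h' not_isArc_snk
  | some (some (w, false)), h' =>
    obtain ⟨hw, -⟩ := isArc_inN_iff.1 h'
    simp only [outN, Option.some.injEq, Prod.mk.injEq] at hw
    simp [inN, hw.1]
  | some (some (w, true)), h' =>
    rcases isArc_outN_iff.1 h' with ⟨hw, -⟩ | ⟨x', hw, -⟩ <;>
      exact absurd hw.symm (by simp)

lemma Valid.outdeg_inN_le (hF : Valid G u A F) (v : V) : outdeg F (inN v) ≤ 1 := by
  apply Finset.card_le_one.2
  rintro ⟨x1, y1⟩ h1 ⟨x2, y2⟩ h2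
  simp only [Finset.mem_filter] at h1 h2
  obtain ⟨m1, e1⟩ := h1; obtain ⟨m2, e2⟩ := h2
  subst e1; subst e2
  have := (hF.mem_of_out_inN m1).1
  have := (hF.mem_of_out_inN m2).1
  simp_all

lemma Valid.indeg_outN_le (hF : Valid G u A F) (v : V) : indeg F (outN v) ≤ 1 := by
  apply Finset.card_le_one.2
  rintro ⟨x1, y1⟩ h1 ⟨x2, y2⟩ h2
  simp only [Finset.mem_filter] at h1 h2
  obtain ⟨m1, e1⟩ := h1; obtain ⟨m2, e2⟩ := h2
  subst e1; subst e2
  have := hF.mem_of_in_outN m1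
  have := hF.mem_of_in_outN m2
  simp_all

lemma Valid.indeg_src (hF : Valid G u A F) : indeg F src = 0 :=
  indeg_eq_zero_iff.2 fun x h => not_isArc_to_src (hF _ h)

lemma Valid.outdeg_snk (hF : Valid G u A F) : outdeg F snk = 0 :=
  outdeg_eq_zero_iff.2 fun y h => not_isArc_snk (hF _ h)

lemma sum_outdeg (F : Finset (N V × N V)) (T : Finset (N V)) :
    ∑ z ∈ T, outdeg F z = (F.filter (fun p => p.1 ∈ T)).card := by
  classical
  rw [show F.filter (fun p => p.1 ∈ T) = T.biUnion (fun z => F.filter (fun p => p.1 = z)) by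
    ext p
    simp only [Finset.mem_filter, Finset.mem_biUnion]
    constructor
    · rintro ⟨hp, ht⟩; exact ⟨p.1, ht, hp, rfl⟩
    · rintro ⟨z, hz, hp, rfl⟩; exact ⟨hp, hz⟩]
  rw [Finset.card_biUnion]
  · rfl
  · intro x hx y hy hxy
    simp only [Finset.disjoint_left, Finset.mem_filter]
    rintro p ⟨-, rfl⟩ ⟨-, h⟩
    exact hxy h

lemma sum_indeg (F : Finset (N V × N V)) (T : Finset (N V)) :
    ∑ z ∈ T, indeg F z = (F.filter (fun p => p.2 ∈ T)).card := by
  classical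
  rw [show F.filter (fun p => p.2 ∈ T) = T.biUnion (fun z => F.filter (fun p => p.2 = z)) by
    ext p
    simp only [Finset.mem_filter, Finset.mem_biUnion]
    constructor
    · rintro ⟨hp, ht⟩; exact ⟨p.2, ht, hp, rfl⟩
    · rintro ⟨z, hz, hp, rfl⟩; exact ⟨hp, hz⟩]
  rw [Finset.card_biUnion]
  · rfl
  · intro x hx y hy hxy
    simp only [Finset.disjoint_left, Finset.mem_filter]
    rintro p ⟨-, rfl⟩ ⟨-, h⟩
    exact hxy h

/-- Net flow across a cut equals the value. -/
lemma cut_value (hF : Valid G u A F) (hc : Conserv F) (T : Finset (N V))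
    (hsrc : src ∈ T) (hsnk : snk ∉ T) :
    (F.filter (fun p => p.1 ∈ T ∧ p.2 ∉ T)).card =
      outdeg F src + (F.filter (fun p => p.1 ∉ T ∧ p.2 ∈ T)).card := by
  classical
  have hsum : ∑ z ∈ T, outdeg F z = outdeg F src + ∑ z ∈ T, indeg F z := by
    have h1 := (Finset.add_sum_erase _ (outdeg F) hsrc).symm
    have h2 := (Finset.add_sum_erase _ (indeg F) hsrc).symm
    have h3 : ∑ z ∈ T.erase src, outdeg F z = ∑ z ∈ T.erase src, indeg F z := by
      apply Finset.sum_congr rfl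
      intro z hz
      simp only [Finset.mem_erase] at hz
      exact hc z hz.1 (fun h => hsnk (h ▸ hz.2))
    rw [h1, h2, h3, hF.indeg_src]
    omega
  have hout : (F.filter (fun p => p.1 ∈ T)).card =
      (F.filter (fun p => p.1 ∈ T ∧ p.2 ∈ T)).card +
      (F.filter (fun p => p.1 ∈ T ∧ p.2 ∉ T)).card := by
    rw [← Finset.filter_filter, ← Finset.filter_filter,
      Finset.card_filter_add_card_filter_not]
  have hin : (F.filter (fun p => p.2 ∈ T)).card =
      (F.filter (fun p => p.1 ∈ T ∧ p.2 ∈ T)).card +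
      (F.filter (fun p => p.1 ∉ T ∧ p.2 ∈ T)).card := by
    have e1 : F.filter (fun p => p.1 ∈ T ∧ p.2 ∈ T) =
        (F.filter (fun p => p.2 ∈ T)).filter (fun p => p.1 ∈ T) := by
      ext p; simp only [Finset.mem_filter]; tauto
    have e2 : F.filter (fun p => p.1 ∉ T ∧ p.2 ∈ T) =
        (F.filter (fun p => p.2 ∈ T)).filter (fun p => ¬ p.1 ∈ T) := by
      ext p; simp only [Finset.mem_filter]; tauto
    rw [e1, e2, Finset.card_filter_add_card_filter_not]
  rw [sum_outdeg, sum_indeg] at hsum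
  omega

/-- Residual step relation for augmenting. -/
def RStep (G : SimpleGraph V) (u : V) (A : Set V) (F : Finset (N V × N V))
    (p q : N V) : Prop :=
  (IsArc G u A p q ∧ (p, q) ∉ F) ∨ (q, p) ∈ F

lemma reach_snk [Fintype V] (hF : Valid G u A F) (hc : Conserv F)
    {F2 : Finset (N V × N V)} (hF2 : Valid G u A F2) (hc2 : Conserv F2)
    (hlt : outdeg F src < outdeg F2 src) :
    Relation.ReflTransGen (RStep G u A F) src snk := by
  classical
  by_contra hreach
  set T : Finset (N V) :=
    Finset.univ.filter (fun z => Relation.ReflTransGen (RStep G u A F) src z) with hT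
  have hsrc : src ∈ T := by
    simp only [hT, Finset.mem_filter, Finset.mem_univ, true_and]
    exact Relation.ReflTransGen.refl
  have hsnk : snk ∉ T := by
    simp only [hT, Finset.mem_filter, Finset.mem_univ, true_and]
    exact hreach
  have hmemT : ∀ z, z ∈ T ↔ Relation.ReflTransGen (RStep G u A F) src z := by
    intro z; simp [hT]
  -- fact a : arcs across the cut are saturated
  have facta : ∀ p q : N V, p ∈ T → q ∉ T → IsArc G u A p q → (p, q) ∈ F := by
    intro p q hp hq harc
    by_contra hpq
    exact hq ((hmemT q).2 (((hmemT p).1 hp).tail (Or.inl ⟨harc, hpq⟩)))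
  -- fact b : no F-arcs enter the cut from outside
  have factb : ∀ p q : N V, p ∈ T → q ∉ T → (q, p) ∉ F := by
    intro p q hp hq hqp
    exact hq ((hmemT q).2 (((hmemT p).1 hp).tail (Or.inr hqp)))
  have hcut := cut_value hF hc T hsrc hsnk
  have hcut2 := cut_value hF2 hc2 T hsrc hsnk
  have hzero : (F.filter (fun p => p.1 ∉ T ∧ p.2 ∈ T)).card = 0 := by
    rw [Finset.card_eq_zero, Finset.filter_eq_empty_iff]
    rintro p hp ⟨h1, h2⟩
    exact factb p.2 p.1 h2 h1 hp
  have hsub : (F2.filter (fun p => p.1 ∈ T ∧ p.2 ∉ T)) ⊆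
      (F.filter (fun p => p.1 ∈ T ∧ p.2 ∉ T)) := by
    intro p hp
    simp only [Finset.mem_filter] at hp ⊢
    exact ⟨facta p.1 p.2 hp.2.1 hp.2.2 (hF2 _ hp.1), hp.2⟩
  have := Finset.card_le_card hsub
  omega

/-- Extract a duplicate-free chain. -/
lemma chain_dedup {α : Type*} {r : α → α → Prop} {b : α} :
    ∀ (fuel : ℕ) (l : List α) (a : α), l.length ≤ fuel → List.Chain r a l →
      (a :: l).getLast? = some b →
      ∃ l' : List α, List.Chain r a l' ∧
        (a :: l').getLast? = some b ∧ (a :: l').Nodup ∧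
        ∀ x ∈ l', x ∈ l := by
  intro fuel
  induction fuel with
  | zero =>
    intro l a hl hch hlast
    rw [List.length_eq_zero_iff.1 (Nat.le_zero.1 hl)] at hch hlast ⊢
    exact ⟨[], hch, hlast, List.nodup_singleton a, by simp⟩
  | succ n ih =>
    intro l a hl hch hlast
    by_cases ha : a ∈ l
    · obtain ⟨l₁, l₂, rfl⟩ := List.append_of_mem ha
      have hch2 : List.Chain r a l₂ := (List.isChain_cons_split.1 hch).2
      have hlast2 : (a :: l₂).getLast? = some b := by
        rw [show a :: (l₁ ++ a :: l₂) = (a :: l₁) ++ (a :: l₂) by simp,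
          List.getLast?_append_of_ne_nil _ (List.cons_ne_nil _ _)] at hlast
        exact hlast
      obtain ⟨l', h1, h2, h3, h4⟩ := ih l₂ a (by simp at hl ⊢; omega) hch2 hlast2
      exact ⟨l', h1, h2, h3, fun x hx => by simp [h4 x hx]⟩
    · match l, hch, hlast with
      | [], _, hlast => exact ⟨[], List.Chain.nil, hlast, List.nodup_singleton a, by simp⟩
      | c :: t, hch', hlast =>
        obtain ⟨hrac, hct⟩ := List.isChain_cons_cons.1 hch'
        have hlast2 : (c :: t).getLast? = some b := by
          rw [List.getLast?_cons_cons] at hlast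
          exact hlast
        obtain ⟨l', h1, h2, h3, h4⟩ := ih t c (by simp at hl; omega) hct hlast2
        refine ⟨c :: l', List.Chain.cons hrac h1, ?_, ?_, ?_⟩
        · rw [List.getLast?_cons_cons]
          exact h2
        · refine List.nodup_cons.2 ⟨?_, h3⟩
          intro hmem
          rcases List.mem_cons.1 hmem with h | h
          · exact ha (h ▸ List.mem_cons_self)
          · exact ha (List.mem_cons_of_mem _ (h4 _ h))
        · intro x hx
          rcases List.mem_cons.1 hx with h | h
          · simp [h]
          · exact List.mem_cons_of_mem _ (h4 _ h)

lemma getLast?_mem' {α : Type*} {l : List α} {a : α} (h : l.getLast? = some a) : a ∈ l := by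
  cases l with
  | nil => simp at h
  | cons x t =>
    rw [List.getLast?_eq_getLast (List.cons_ne_nil _ _), Option.some_inj] at h
    exact h ▸ List.getLast_mem _

lemma augment_fold {m : ℕ} (F₀ : Finset (N V × N V)) :
    ∀ (l : List (N V)) (z : N V) (F : Finset (N V × N V)) (vis : List (N V)),
      List.Chain (RStep G u A F₀) z l →
      (z :: l).getLast? = some snk →
      (vis ++ z :: l).Nodup →
      src ∈ vis →
      Valid G u A F₀ →
      Valid G u A F →
      (∀ y : N V, y ≠ src → y ≠ snk → y ≠ z → outdeg F y = indeg F y) →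
      (z ≠ snk → indeg F z = outdeg F z + 1) →
      outdeg F src = m + 1 →
      (∀ x : V, (outN x, snk) ∈ F₀ → (outN x, snk) ∈ F) →
      (∀ p q : N V, ((p, q) ∈ F ↔ (p, q) ∈ F₀) ∨ (p ∈ z :: vis ∧ q ∈ z :: vis)) →
      ∃ F' : Finset (N V × N V), Valid G u A F' ∧ Conserv F' ∧
        outdeg F' src = m + 1 ∧
        (∀ x : V, (outN x, snk) ∈ F₀ → (outN x, snk) ∈ F') := by
  intro l
  induction l with
  | nil =>
    intro z F vis _ hlast _ _ _ hFv hA2 _ hval hsink _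
    have hz : z = snk := by simpa using hlast
    subst hz
    exact ⟨F, hFv, fun y h1 h2 => hA2 y h1 h2 h2, hval, hsink⟩
  | cons z' t ih =>
    intro z F vis hch hlast hnodup hsrcvis hF0v hFv hA2 hA3 hval hsink hA6
    rw [List.nodup_append'] at hnodup
    obtain ⟨hnvis, hntail, hdisj⟩ := hnodup
    have hzsrc : z ≠ src := fun h => (hdisj hsrcvis (h ▸ List.mem_cons_self)).elim
    have hz'src : z' ≠ src :=
      fun h => (hdisj hsrcvis (h ▸ List.mem_cons_of_mem _ (List.mem_cons_self))).elim
    have hzz' : z ≠ z' := by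
      intro h
      have := List.nodup_cons.1 hntail
      exact this.1 (h ▸ List.mem_cons_self)
    have hz'vis : z' ∉ vis := fun h => (hdisj h (List.mem_cons_of_mem _ (List.mem_cons_self))).elim
    have hzvis : z ∉ vis := fun h => (hdisj h (List.mem_cons_self)).elim
    have hzsnk : z ≠ snk := by
      intro h
      have h2 : (z' :: t).getLast? = some snk := by
        rw [List.getLast?_cons_cons] at hlast; exact hlast
      have := List.nodup_cons.1 hntail
      exact this.1 (h ▸ getLast?_mem' h2)
    have hz'notin : z' ∉ (z :: vis) := by
      intro h
      rcases List.mem_cons.1 h with h | h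
      · exact hzz' h.symm
      · exact hz'vis h
    have hstep : RStep G u A F₀ z z' := List.chain_cons.1 hch |>.1
    have hct : List.Chain (RStep G u A F₀) z' t := (List.chain_cons.1 hch).2
    have hlast2 : (z' :: t).getLast? = some snk := by
      rw [List.getLast?_cons_cons] at hlast; exact hlast
    have hnodup2 : ((z :: vis) ++ z' :: t).Nodup := by
      have : (vis ++ z :: (z' :: t)).Nodup := by
        rw [List.nodup_append']; exact ⟨hnvis, hntail, hdisj⟩
      have h2 := ((List.perm_middle (a := z) (l₁ := vis) (l₂ := z' :: t))).nodup_iff.1 this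
      simpa using h2
    rcases hstep with ⟨harc, hnF0⟩ | hqp
    · -- forward step
      have hnF : (z, z') ∉ F := by
        rcases hA6 z z' with h | h
        · exact fun hm => hnF0 (h.1 hm)
        · exact absurd h.2 hz'notin
      refine ih z' (insert (z, z') F) (z :: vis) hct hlast2 hnodup2
        (List.mem_cons_of_mem _ hsrcvis) hF0v ?_ ?_ ?_ ?_ ?_ ?_
      · intro p hp
        rcases Finset.mem_insert.1 hp with h | h
        · rw [h]; exact harc
        · exact hFv p h
      · intro y h1 h2 h3
        by_cases hyz : y = z
        · subst hyz
          rw [outdeg_insert_of_eq (z := y) hnF rfl,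
            indeg_insert_of_ne (z := y) (by exact fun h => hzz' h.symm)]
          have := hA3 hzsnk
          omega
        · rw [outdeg_insert_of_ne (z := y) (by exact fun h => hyz h.symm),
            indeg_insert_of_ne (z := y) (by exact fun h => h3 h.symm)]
          exact hA2 y h1 h2 hyz
      · intro hz'snk
        rw [indeg_insert_of_eq (z := z') hnF rfl,
          outdeg_insert_of_ne (z := z') (by exact fun h => hzz' h)]
        have := hA2 z' hz'src hz'snk (fun h => hzz' h.symm)
        omega
      · rw [outdeg_insert_of_ne (z := KSAux.src) (by exact fun h => hzsrc h)]
        exact hval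
      · intro x hx
        exact Finset.mem_insert_of_mem (hsink x hx)
      · intro p q
        by_cases hpq : (p, q) = (z, z')
        · right
          rw [Prod.mk.injEq] at hpq
          constructor
          · rw [hpq.1]; exact List.mem_cons_of_mem _ (List.mem_cons_self)
          · rw [hpq.2]; exact List.mem_cons_self
        · rcases hA6 p q with h | h
          · left
            rw [Finset.mem_insert]
            constructor
            · rintro (h' | h')
              · exact absurd h' hpq
              · exact h.1 h'
            · intro h'; exact Or.inr (h.2 h')
          · right
            exact ⟨List.mem_cons_of_mem _ h.1, List.mem_cons_of_mem _ h.2⟩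
    · -- backward step
      have hinF : (z', z) ∈ F := by
        rcases hA6 z' z with h | h
        · exact h.2 hqp
        · exact absurd h.1 hz'notin
      have hz'snk : z' ≠ snk := by
        intro h
        exact not_isArc_snk (h ▸ hF0v _ hqp)
      refine ih z' (F.erase (z', z)) (z :: vis) hct hlast2 hnodup2
        (List.mem_cons_of_mem _ hsrcvis) hF0v ?_ ?_ ?_ ?_ ?_ ?_
      · intro p hp
        exact hFv p (Finset.mem_of_mem_erase hp)
      · intro y h1 h2 h3
        by_cases hyz : y = z
        · subst hyz
          rw [indeg_erase_of_mem (z := y) hinF rfl,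
            outdeg_erase_of_ne (z := y) (by exact fun h => hzz' h.symm)]
          have := hA3 hzsnk
          omega
        · rw [outdeg_erase_of_ne (z := y) (by exact fun h => h3 h.symm),
            indeg_erase_of_ne (z := y) (by exact fun h => hyz h.symm)]
          exact hA2 y h1 h2 hyz
      · intro _
        rw [outdeg_erase_of_mem (z := z') hinF rfl,
          indeg_erase_of_ne (z := z') (by exact fun h => hzz' h)]
        have h1 := hA2 z' hz'src hz'snk (fun h => hzz' h.symm)
        have h2 : 0 < outdeg F z' := outdeg_pos_iff.2 ⟨z, hinF⟩
        omega
      · rw [outdeg_erase_of_ne (z := KSAux.src) (by exact fun h => hz'src h)]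
        exact hval
      · intro x hx
        refine Finset.mem_erase.2 ⟨?_, hsink x hx⟩
        intro h
        rw [Prod.mk.injEq] at h
        exact hzsnk h.2.symm
      · intro p q
        by_cases hpq : (p, q) = (z', z)
        · right
          rw [Prod.mk.injEq] at hpq
          constructor
          · rw [hpq.1]; exact List.mem_cons_self
          · rw [hpq.2]; exact List.mem_cons_of_mem _ (List.mem_cons_self)
        · rcases hA6 p q with h | h
          · left
            rw [Finset.mem_erase]
            constructor
            · rintro ⟨-, h'⟩; exact h.1 h'
            · intro h'; exact ⟨hpq, h.2 h'⟩
          · right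
            exact ⟨List.mem_cons_of_mem _ h.1, List.mem_cons_of_mem _ h.2⟩

/-- The augmentation step: a flow of smaller value than some other flow can be increased
by one unit, preserving all sink arcs. -/
lemma augment [Fintype V] (hF0 : Valid G u A F) (hc : Conserv F)
    {F2 : Finset (N V × N V)} (hF2 : Valid G u A F2) (hc2 : Conserv F2)
    (hlt : outdeg F src < outdeg F2 src) :
    ∃ F' : Finset (N V × N V), Valid G u A F' ∧ Conserv F' ∧
      outdeg F' src = outdeg F src + 1 ∧
      ∀ x : V, (outN x, snk) ∈ F → (outN x, snk) ∈ F' := by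
  obtain ⟨l0, hch0, hlast0⟩ :=
    List.exists_isChain_cons_of_relationReflTransGen (reach_snk hF0 hc hF2 hc2 hlt)
  have hlast0' : ((src : N V) :: l0).getLast? = some snk := by
    rw [List.getLast?_eq_getLast (List.cons_ne_nil _ _), hlast0]
  obtain ⟨l, hch, hlast, hnodup, -⟩ := chain_dedup l0.length l0 src le_rfl hch0 hlast0'
  match l, hch, hlast, hnodup with
  | [], _, hlast, _ => simp at hlast
  | z₁ :: t, hch, hlast, hnodup =>
    have hstep : RStep G u A F src z₁ := (List.chain_cons.1 hch).1
    have hct : List.Chain (RStep G u A F) z₁ t := (List.chain_cons.1 hch).2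
    rcases hstep with ⟨harc, hnarc⟩ | hbad
    swap
    · exact absurd (hF0 _ hbad) not_isArc_to_src
    obtain ⟨v, hv, -⟩ := isArc_src_iff.1 harc
    have hz₁snk : z₁ ≠ snk := by rw [hv]; exact inN_ne_snk
    have hz₁src : z₁ ≠ src := by rw [hv]; exact inN_ne_src
    have hlast2 : (z₁ :: t).getLast? = some snk := by
      rw [List.getLast?_cons_cons] at hlast; exact hlast
    obtain ⟨F', h1, h2, h3, h4⟩ := augment_fold (m := outdeg F src) F t z₁
      (insert (src, z₁) F) [src] hct hlast2 (by simpa using hnodup)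
      (List.mem_singleton_self _) hF0
      (by
        intro p hp
        rcases Finset.mem_insert.1 hp with h | h
        · rw [h]; exact harc
        · exact hF0 p h)
      (by
        intro y h1 h2 h3
        rw [outdeg_insert_of_ne (z := y) (by exact fun h => h1 h.symm),
          indeg_insert_of_ne (z := y) (by exact fun h => h3 h.symm)]
        exact hc y h1 h2)
      (by
        intro _
        rw [indeg_insert_of_eq (z := z₁) hnarc rfl,
          outdeg_insert_of_ne (z := z₁) (by exact fun h => hz₁src h.symm)]
        rw [hc z₁ hz₁src hz₁snk])
      (by rw [outdeg_insert_of_eq (z := KSAux.src) hnarc rfl])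
      (fun x hx => Finset.mem_insert_of_mem hx)
      (by
        intro p q
        by_cases hpq : (p, q) = (src, z₁)
        · right
          rw [Prod.mk.injEq] at hpq
          exact ⟨by rw [hpq.1]; simp, by rw [hpq.2]; simp⟩
        · left
          rw [Finset.mem_insert]
          constructor
          · rintro (h' | h')
            · exact absurd h' hpq
            · exact h'
          · exact fun h' => Or.inr h')
    exact ⟨F', h1, h2, h3, h4⟩

lemma eq_of_outdeg_one {z y1 y2 : N V} (h : outdeg F z ≤ 1)
    (h1 : (z, y1) ∈ F) (h2 : (z, y2) ∈ F) : y1 = y2 := by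
  have := Finset.card_le_one.1 h (z, y1) (by simp [Finset.mem_filter, h1])
    (z, y2) (by simp [Finset.mem_filter, h2])
  simpa using this

lemma eq_of_indeg_one {z x1 x2 : N V} (h : indeg F z ≤ 1)
    (h1 : (x1, z) ∈ F) (h2 : (x2, z) ∈ F) : x1 = x2 := by
  have := Finset.card_le_one.1 h (x1, z) (by simp [Finset.mem_filter, h1])
    (x2, z) (by simp [Finset.mem_filter, h2])
  simpa using this

lemma outdeg_sdiff_untouched {used : Finset (N V × N V)} {z : N V}
    (h : ∀ p ∈ used, p.1 ≠ z) : outdeg (F \ used) z = outdeg F z := by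
  unfold outdeg
  congr 1
  ext p
  simp only [Finset.mem_filter, Finset.mem_sdiff]
  constructor
  · rintro ⟨⟨h1, -⟩, h2⟩; exact ⟨h1, h2⟩
  · rintro ⟨h1, h2⟩
    exact ⟨⟨h1, fun hm => h p hm h2⟩, h2⟩

lemma indeg_sdiff_untouched {used : Finset (N V × N V)} {z : N V}
    (h : ∀ p ∈ used, p.2 ≠ z) : indeg (F \ used) z = indeg F z := by
  unfold indeg
  congr 1
  ext p
  simp only [Finset.mem_filter, Finset.mem_sdiff]
  constructor
  · rintro ⟨⟨h1, -⟩, h2⟩; exact ⟨h1, h2⟩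
  · rintro ⟨h1, h2⟩
    exact ⟨⟨h1, fun hm => h p hm h2⟩, h2⟩

lemma outdeg_sdiff_zero {used : Finset (N V × N V)} {z : N V}
    (h : ∀ y, (z, y) ∈ F → (z, y) ∈ used) : outdeg (F \ used) z = 0 := by
  apply outdeg_eq_zero_iff.2
  intro y hy
  rw [Finset.mem_sdiff] at hy
  exact hy.2 (h y hy.1)

lemma indeg_sdiff_zero {used : Finset (N V × N V)} {z : N V}
    (h : ∀ x, (x, z) ∈ F → (x, z) ∈ used) : indeg (F \ used) z = 0 := by
  apply indeg_eq_zero_iff.2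
  intro x hx
  rw [Finset.mem_sdiff] at hx
  exact hx.2 (h x hx.1)

/-- Follow a unit of flow from `v` to the sink, extracting a path of `G`. -/
lemma follow : ∀ (n : ℕ) (F : Finset (N V × N V)), F.card ≤ n → Valid G u A F →
    ∀ v : V,
    (∀ z : N V, z ≠ src → z ≠ snk → z ≠ inN v → outdeg F z = indeg F z) →
    outdeg F (inN v) = 1 → indeg F (inN v) = 0 →
    ∃ (a : V) (w : G.Walk v a) (used : Finset (N V × N V)),
      used ⊆ F ∧ w.IsPath ∧ a ∈ A ∧
      (∀ x ∈ w.support, x ≠ u) ∧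
      (∀ x ∈ w.support, x ∈ A → x = a) ∧
      (∀ x ∈ w.support, (inN x, outN x) ∈ used) ∧
      (outN a, snk) ∈ used ∧ (∀ x : V, (outN x, snk) ∈ used → x = a) ∧
      (∀ z : N V, z ≠ src → z ≠ snk → outdeg (F \ used) z = indeg (F \ used) z) ∧
      outdeg (F \ used) src = outdeg F src ∧
      (∀ x ∈ w.support, ∀ p ∈ F \ used,
        p.1 ≠ inN x ∧ p.1 ≠ outN x ∧ p.2 ≠ inN x ∧ p.2 ≠ outN x) := by
  intro n
  induction n with
  | zero =>
    intro F hcard hFv v hcons hout hin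
    obtain ⟨y, hy⟩ := outdeg_pos_iff.1 (hout ▸ Nat.one_pos)
    have : 0 < F.card := Finset.card_pos.2 ⟨_, hy⟩
    omega
  | succ n ih =>
    intro F hcard hFv v hcons hout hin
    -- the unique out-arc of (inN v)
    obtain ⟨y, hy⟩ := outdeg_pos_iff.1 (show 0 < outdeg F (inN v) by omega)
    obtain ⟨hy', hvu⟩ := hFv.mem_of_out_inN hy
    subst hy'
    -- conservation at (outN v)
    have houtv_in : indeg F (outN v) = 1 := by
      have h1 := hFv.indeg_outN_le v
      have h2 : 0 < indeg F (outN v) := indeg_pos_iff.2 ⟨_, hy⟩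
      omega
    have houtv_out : outdeg F (outN v) = 1 := by
      rw [hcons (outN v) outN_ne_src outN_ne_snk (by simp [outN, inN])]
      exact houtv_in
    obtain ⟨y2, hy2⟩ := outdeg_pos_iff.1 (show 0 < outdeg F (outN v) by omega)
    have hy2arc := hFv _ hy2
    rcases isArc_outN_iff.1 hy2arc with ⟨rfl, hvA⟩ | ⟨w', rfl, hadj, hvA, hvu', hw'u⟩
    · -- reached the sink
      refine ⟨v, SimpleGraph.Walk.nil, {(inN v, outN v), (outN v, snk)}, ?_, ?_, hvA,
        ?_, ?_, ?_, ?_, ?_, ?_, ?_, ?_⟩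
      · intro p hp
        rcases Finset.mem_insert.1 hp with h | h
        · rw [h]; exact hy
        · rw [Finset.mem_singleton.1 h]; exact hy2
      · exact SimpleGraph.Walk.IsPath.nil
      · intro x hx; simp at hx; subst hx; exact hvu
      · intro x hx _; simp at hx; exact hx
      · intro x hx; simp at hx; subst hx; simp
      · simp
      · intro x hx
        simp only [Finset.mem_insert, Finset.mem_singleton, Prod.mk.injEq] at hx
        rcases hx with ⟨h1, h2⟩ | ⟨h1, h2⟩
        · exact (outN_ne_snk h2.symm).elim
        · exact outN_inj.1 h1
      · -- conservation after removal
        intro z hzsrc hzsnk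
        by_cases hz1 : z = inN v
        · subst hz1
          rw [outdeg_sdiff_zero (fun y hy' => by
              rw [(hFv.mem_of_out_inN hy').1]; simp),
            indeg_sdiff_zero (fun x hx =>
              absurd hin (by
                have : 0 < indeg F (inN v) := indeg_pos_iff.2 ⟨x, hx⟩
                omega))]
        · by_cases hz2 : z = outN v
          · subst hz2
            rw [outdeg_sdiff_zero (fun y hy' => by
                have := eq_of_outdeg_one (le_of_eq houtv_out) hy' hy2
                subst this; simp),
              indeg_sdiff_zero (fun x hx => by
                have := hFv.mem_of_in_outN hx
                subst this; simp)]
          · rw [outdeg_sdiff_untouched, indeg_sdiff_untouched]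
            · exact hcons z hzsrc hzsnk hz1
            · intro p hp
              simp only [Finset.mem_insert, Finset.mem_singleton] at hp
              rcases hp with rfl | rfl
              · exact fun h => hz2 h.symm
              · exact fun h => hzsnk h.symm
            · intro p hp
              simp only [Finset.mem_insert, Finset.mem_singleton] at hp
              rcases hp with rfl | rfl
              · exact fun h => hz1 h.symm
              · exact fun h => hz2 h.symm
      · rw [outdeg_sdiff_untouched]
        intro p hp
        simp only [Finset.mem_insert, Finset.mem_singleton] at hp
        rcases hp with rfl | rfl
        · exact inN_ne_src
        · exact outN_ne_src
      · intro x hx p hp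
        simp only [SimpleGraph.Walk.support_nil, List.mem_singleton] at hx
        subst hx
        rw [Finset.mem_sdiff] at hp
        obtain ⟨hpF, hpu⟩ := hp
        refine ⟨?_, ?_, ?_, ?_⟩
        · intro h
          apply hpu
          have h2 := hFv.mem_of_out_inN (show (inN x, p.2) ∈ F by
            rw [← h]; exact (Prod.mk.eta (p := p)) ▸ hpF)
          refine Finset.mem_insert.2 (Or.inl ?_)
          exact Prod.ext h h2.1
        · intro h
          apply hpu
          have h2 : p.2 = snk := eq_of_outdeg_one (le_of_eq houtv_out)
            (show (outN x, p.2) ∈ F by rw [← h]; exact (Prod.mk.eta (p := p)) ▸ hpF) hy2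
          refine Finset.mem_insert.2 (Or.inr (Finset.mem_singleton.2 ?_))
          exact Prod.ext h h2
        · intro h
          have : 0 < indeg F (inN x) := indeg_pos_iff.2 ⟨p.1, by
            rw [← h]; exact (Prod.mk.eta (p := p)) ▸ hpF⟩
          omega
        · intro h
          apply hpu
          have h2 : p.1 = inN x := hFv.mem_of_in_outN (show (p.1, outN x) ∈ F by
            rw [← h]; exact (Prod.mk.eta (p := p)) ▸ hpF)
          refine Finset.mem_insert.2 (Or.inl ?_)
          exact Prod.ext h2 h
    · -- continue to w'
      have hvw' : v ≠ w' := G.ne_of_adj hadj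
      have hinw_ne : inN w' ≠ inN v := fun h => hvw' (inN_inj.1 h).symm
      -- degrees at inN w' in F
      have hinw_out : outdeg F (inN w') = indeg F (inN w') := by
        refine hcons (inN w') inN_ne_src inN_ne_snk hinw_ne
      have hinw_in_pos : 0 < indeg F (inN w') := indeg_pos_iff.2 ⟨_, hy2⟩
      have hinw_out_le := hFv.outdeg_inN_le w'
      have hinw_out1 : outdeg F (inN w') = 1 := by omega
      have hinw_in1 : indeg F (inN w') = 1 := by omega
      set F' := (F.erase (inN v, outN v)).erase (outN v, inN w') with hF'
      have hmem1 : (inN v, outN v) ∈ F := hy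
      have hmem2 : (outN v, inN w') ∈ F.erase (inN v, outN v) :=
        Finset.mem_erase.2 ⟨by simp, hy2⟩
      have hF'sub : F' ⊆ F := fun p hp =>
        Finset.mem_of_mem_erase (Finset.mem_of_mem_erase hp)
      have hF'mem : ∀ p : N V × N V, p ∈ F' ↔ p ∈ F ∧ p ≠ (inN v, outN v) ∧ p ≠ (outN v, inN w') := by
        intro p
        rw [hF', Finset.mem_erase, Finset.mem_erase]
        tauto
      have hcard' : F'.card ≤ n := by
        have h1 : (F.erase (inN v, outN v)).card = F.card - 1 :=
          Finset.card_erase_of_mem hmem1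
        have h2 : F'.card = (F.erase (inN v, outN v)).card - 1 :=
          Finset.card_erase_of_mem hmem2
        have h3 : 0 < F.card := Finset.card_pos.2 ⟨_, hy⟩
        omega
      have hF'v : Valid G u A F' := fun p hp => hFv p (hF'sub hp)
      -- degree changes
      have hdeg_out : ∀ z : N V, z ≠ inN v → z ≠ outN v → outdeg F' z = outdeg F z := by
        intro z h1 h2
        rw [hF', outdeg_erase_of_ne (by exact fun h => h2 h.symm),
          outdeg_erase_of_ne (by exact fun h => h1 h.symm)]
      have hdeg_in : ∀ z : N V, z ≠ outN v → z ≠ inN w' → indeg F' z = indeg F z := by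
        intro z h1 h2
        rw [hF', indeg_erase_of_ne (by exact fun h => h2 h.symm),
          indeg_erase_of_ne (by exact fun h => h1 h.symm)]
      have hcons' : ∀ z : N V, z ≠ src → z ≠ snk → z ≠ inN w' →
          outdeg F' z = indeg F' z := by
        intro z hzsrc hzsnk hzw'
        by_cases hz1 : z = inN v
        · subst hz1
          have ho : outdeg F' (inN v) = 0 := by
            apply outdeg_eq_zero_iff.2
            intro y hy'
            rw [hF'mem] at hy'
            obtain ⟨hyF, hne1, -⟩ := hy'
            exact hne1 (by rw [(hFv.mem_of_out_inN hyF).1])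
          have hi : indeg F' (inN v) = 0 := by
            apply indeg_eq_zero_iff.2
            intro x hx
            have : 0 < indeg F (inN v) := indeg_pos_iff.2 ⟨x, hF'sub hx⟩
            omega
          rw [ho, hi]
        · by_cases hz2 : z = outN v
          · subst hz2
            have ho : outdeg F' (outN v) = 0 := by
              apply outdeg_eq_zero_iff.2
              intro y hy'
              rw [hF'mem] at hy'
              obtain ⟨hyF, -, hne2⟩ := hy'
              exact hne2 (by
                rw [eq_of_outdeg_one (le_of_eq houtv_out) hyF hy2])
            have hi : indeg F' (outN v) = 0 := by
              apply indeg_eq_zero_iff.2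
              intro x hx
              rw [hF'mem] at hx
              obtain ⟨hxF, hne1, -⟩ := hx
              exact hne1 (by rw [hFv.mem_of_in_outN hxF])
            rw [ho, hi]
          · rw [hdeg_out z hz1 hz2, hdeg_in z hz2 hzw']
            exact hcons z hzsrc hzsnk hz1
      have hout' : outdeg F' (inN w') = 1 := by
        rw [hdeg_out _ hinw_ne (by exact outN_ne_inN.symm)]
        exact hinw_out1
      have hin' : indeg F' (inN w') = 0 := by
        apply indeg_eq_zero_iff.2
        intro x hx
        rw [hF'mem] at hx
        obtain ⟨hxF, -, hne2⟩ := hx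
        exact hne2 (by
          rw [eq_of_indeg_one (le_of_eq hinw_in1) hxF hy2])
      obtain ⟨a, w2, used2, husub, hpath, haA, hnu, hAend, hsupparc, hsnkmem, hsnkuniq,
        hconsrest, hsrcrest, hisol⟩ := ih F' hcard' hF'v w' hcons' hout' hin'
      have hvnotin : v ∉ w2.support := by
        intro hv
        have hm := husub (hsupparc v hv)
        exact ((hF'mem _).1 hm).2.1 rfl
      have hsdiff_eq : F \ (insert (inN v, outN v) (insert (outN v, inN w') used2)) =
          F' \ used2 := by
        ext p
        simp only [Finset.mem_sdiff, Finset.mem_insert, hF'mem]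
        constructor
        · rintro ⟨hpF, hne⟩
          push_neg at hne
          exact ⟨⟨hpF, hne.1, hne.2.1⟩, hne.2.2⟩
        · rintro ⟨⟨hpF, hne1, hne2⟩, hne3⟩
          exact ⟨hpF, by push_neg; exact ⟨hne1, hne2, hne3⟩⟩
      refine ⟨a, SimpleGraph.Walk.cons hadj w2,
        insert (inN v, outN v) (insert (outN v, inN w') used2), ?_, ?_, haA,
        ?_, ?_, ?_, ?_, ?_, ?_, ?_, ?_⟩
      · intro p hp
        rcases Finset.mem_insert.1 hp with h | h
        · rw [h]; exact hy
        rcases Finset.mem_insert.1 h with h' | h'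
        · rw [h']; exact hy2
        · exact hF'sub (husub h')
      · rw [SimpleGraph.Walk.cons_isPath_iff]
        exact ⟨hpath, hvnotin⟩
      · intro x hx
        rw [SimpleGraph.Walk.support_cons, List.mem_cons] at hx
        rcases hx with rfl | hx
        · exact hvu
        · exact hnu x hx
      · intro x hx hxA
        rw [SimpleGraph.Walk.support_cons, List.mem_cons] at hx
        rcases hx with rfl | hx
        · exact absurd hxA hvA
        · exact hAend x hx hxA
      · intro x hx
        rw [SimpleGraph.Walk.support_cons, List.mem_cons] at hx
        rcases hx with rfl | hx
        · simp
        · exact Finset.mem_insert_of_mem (Finset.mem_insert_of_mem (hsupparc x hx))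
      · exact Finset.mem_insert_of_mem (Finset.mem_insert_of_mem hsnkmem)
      · intro x hx
        rcases Finset.mem_insert.1 hx with h | h
        · exact absurd (congrArg Prod.snd h) (by simp)
        rcases Finset.mem_insert.1 h with h' | h'
        · exact absurd (congrArg Prod.snd h') (by simp)
        · exact hsnkuniq x h'
      · intro z h1 h2
        rw [hsdiff_eq]
        exact hconsrest z h1 h2
      · rw [hsdiff_eq, hsrcrest]
        rw [hdeg_out _ (by exact src_ne_inN) (by exact src_ne_outN)]
      · intro x hx p hp
        rw [hsdiff_eq] at hp
        rw [SimpleGraph.Walk.support_cons, List.mem_cons] at hx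
        rcases hx with rfl | hx
        · rw [Finset.mem_sdiff] at hp
          obtain ⟨hpF', hpu2⟩ := hp
          rw [hF'mem] at hpF'
          obtain ⟨hpF, hne1, hne2⟩ := hpF'
          refine ⟨?_, ?_, ?_, ?_⟩
          · intro h
            apply hne1
            have h2 := hFv.mem_of_out_inN (show (inN x, p.2) ∈ F by
              rw [← h]; exact (Prod.mk.eta (p := p)) ▸ hpF)
            rw [← Prod.mk.eta (p := p), h, h2.1]
          · intro h
            apply hne2
            have h2 : p.2 = inN w' := eq_of_outdeg_one (le_of_eq houtv_out)
              (show (outN x, p.2) ∈ F by rw [← h]; exact (Prod.mk.eta (p := p)) ▸ hpF) hy2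
            rw [← Prod.mk.eta (p := p), h, h2]
          · intro h
            have : 0 < indeg F (inN x) := indeg_pos_iff.2 ⟨p.1, by
              rw [← h]; exact (Prod.mk.eta (p := p)) ▸ hpF⟩
            omega
          · intro h
            apply hne1
            have h2 : p.1 = inN x := hFv.mem_of_in_outN (show (p.1, outN x) ∈ F by
              rw [← h]; exact (Prod.mk.eta (p := p)) ▸ hpF)
            rw [← Prod.mk.eta (p := p), h, h2]
        · exact hisol x hx p hp

lemma indeg_snk [Fintype V] (hF : Valid G u A F) (hc : Conserv F) :
    indeg F snk = outdeg F src := by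
  classical
  have h := cut_value hF hc (Finset.univ.erase snk) (Finset.mem_erase.2 ⟨snk_ne_src.symm, Finset.mem_univ _⟩)
    (by simp)
  have h2 : (F.filter (fun p => p.1 ∉ Finset.univ.erase snk ∧ p.2 ∈ Finset.univ.erase snk)).card = 0 := by
    rw [Finset.card_eq_zero, Finset.filter_eq_empty_iff]
    rintro p hp ⟨h1, -⟩
    simp only [Finset.mem_erase, Finset.mem_univ, and_true, not_not] at h1
    have h4 : IsArc G u A p.1 p.2 := hF _ hp
    rw [h1] at h4
    exact not_isArc_snk h4
  have h3 : F.filter (fun p => p.1 ∈ Finset.univ.erase snk ∧ p.2 ∉ Finset.univ.erase snk) =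
      F.filter (fun p => p.2 = snk) := by
    ext p
    simp only [Finset.mem_filter, Finset.mem_erase, Finset.mem_univ, and_true, not_not]
    constructor
    · rintro ⟨hp, -, h4⟩; exact ⟨hp, h4⟩
    · rintro ⟨hp, h4⟩
      refine ⟨hp, ?_, h4⟩
      intro h5
      exact not_isArc_snk (h5 ▸ hF _ hp)
  rw [h3, h2] at h
  simpa [indeg] using h

lemma flow_to_fan [Fintype V] (hu : u ∉ A) : ∀ (n : ℕ) (m : ℕ) (F : Finset (N V × N V)), F.card ≤ n →
    Valid G u A F → Conserv F → outdeg F src = m →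
    ∃ (c : Fin m → V) (r : ∀ i, G.Walk u (c i)),
      Function.Injective c ∧ (∀ i, c i ∈ A) ∧
      (∀ i, (r i).IsPath) ∧
      (∀ i j, i ≠ j → ∀ x, x ∈ (r i).support → x ∈ (r j).support → x = u) ∧
      (∀ i, ∀ x ∈ (r i).support, x ∈ A → x = c i) ∧
      (∀ i, ∀ x ∈ (r i).support, x = u ∨ (inN x, outN x) ∈ F) ∧
      (∀ i, (outN (c i), snk) ∈ F) ∧
      (∀ x : V, (outN x, snk) ∈ F → ∃ i, c i = x) := by
  intro n
  induction n with
  | zero =>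
    intro m F hcard hFv hc hval
    have hF0 : F = ∅ := Finset.card_eq_zero.1 (Nat.le_zero.1 hcard)
    subst hF0
    have hm : m = 0 := by rw [← hval]; simp [outdeg]
    subst hm
    exact ⟨Fin.elim0, fun i => i.elim0, fun i => i.elim0, fun i => i.elim0,
      fun i => i.elim0, fun i => i.elim0, fun i => i.elim0, fun i => i.elim0,
      fun i => i.elim0, fun x hx => by simp at hx⟩
  | succ n ih =>
    intro m F hcard hFv hc hval
    match m, hval with
    | 0, hval =>
      refine ⟨Fin.elim0, fun i => i.elim0, fun i => i.elim0, fun i => i.elim0,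
        fun i => i.elim0, fun i => i.elim0, fun i => i.elim0, fun i => i.elim0,
        fun i => i.elim0, fun x hx => ?_⟩
      exfalso
      have h0 : indeg F snk = 0 := by rw [indeg_snk hFv hc, hval]
      have : 0 < indeg F snk := indeg_pos_iff.2 ⟨_, hx⟩
      omega
    | (m' + 1), hval =>
      obtain ⟨y, hy⟩ := outdeg_pos_iff.1 (show 0 < outdeg F src by omega)
      obtain ⟨v, rfl, hadj⟩ := isArc_src_iff.1 (hFv _ hy)
      set F₁ := F.erase (src, inN v) with hF₁
      have hF₁v : Valid G u A F₁ := fun p hp => hFv p (Finset.mem_of_mem_erase hp)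
      have hinv_le := hFv.outdeg_inN_le v
      have hinv_pos : 0 < indeg F (inN v) := indeg_pos_iff.2 ⟨_, hy⟩
      have hinv_eq : outdeg F (inN v) = indeg F (inN v) :=
        hc (inN v) inN_ne_src inN_ne_snk
      have hinv1 : indeg F (inN v) = 1 := by omega
      have hcons1 : ∀ z : N V, z ≠ src → z ≠ snk → z ≠ inN v →
          outdeg F₁ z = indeg F₁ z := by
        intro z h1 h2 h3
        rw [hF₁, outdeg_erase_of_ne (by exact fun h => h1 h.symm),
          indeg_erase_of_ne (by exact fun h => h3 h.symm)]
        exact hc z h1 h2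
      have hout1 : outdeg F₁ (inN v) = 1 := by
        rw [hF₁, outdeg_erase_of_ne (by exact fun h => src_ne_inN (h : (src : N V) = inN v))]
        omega
      have hin1 : indeg F₁ (inN v) = 0 := by
        apply indeg_eq_zero_iff.2
        intro x hx
        rw [hF₁, Finset.mem_erase] at hx
        exact hx.1 (by rw [eq_of_indeg_one (le_of_eq hinv1) hx.2 hy])
      have hcard1 : F₁.card ≤ n := by
        rw [hF₁, Finset.card_erase_of_mem hy]
        omega
      obtain ⟨a, w2, used, husub, hpath, haA, hnu, hAend, hsupparc, hsnkmem, hsnkuniq,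
        hconsrest, hsrcrest, hisol⟩ := follow n F₁ hcard1 hF₁v v hcons1 hout1 hin1
      set F₂ := F₁ \ used with hF₂
      have hF₂v : Valid G u A F₂ := fun p hp => hF₁v p (Finset.mem_sdiff.1 hp).1
      have hF₂c : Conserv F₂ := fun z h1 h2 => hconsrest z h1 h2
      have hF₂val : outdeg F₂ src = m' := by
        rw [hF₂, hsrcrest, hF₁, outdeg_erase_of_mem hy rfl, hval]
        omega
      have hF₂card : F₂.card ≤ n :=
        le_trans (Finset.card_le_card (Finset.sdiff_subset)) hcard1
      obtain ⟨c', r', hinj', hA', hpath', hdisj', hAend', hsupp', hsnk', hcov'⟩ :=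
        ih m' F₂ hF₂card hF₂v hF₂c hF₂val
      have husubF : used ⊆ F := fun p hp => Finset.mem_of_mem_erase (husub hp)
      have hF₂subF : F₂ ⊆ F := fun p hp => Finset.mem_of_mem_erase ((Finset.mem_sdiff.1 hp).1)
      have hr0path : (SimpleGraph.Walk.cons hadj w2).IsPath := by
        rw [SimpleGraph.Walk.cons_isPath_iff]
        exact ⟨hpath, fun h => hnu u h rfl⟩
      set f : ∀ _ : Fin (m' + 1), Σ' (x : V), G.Walk u x :=
        Fin.cases ⟨a, SimpleGraph.Walk.cons hadj w2⟩ (fun i => ⟨c' i, r' i⟩) with hf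
      refine ⟨fun i => (f i).1, fun i => (f i).2, ?_, ?_, ?_, ?_, ?_, ?_, ?_, ?_⟩
      · intro i j hij
        induction i using Fin.cases with
        | zero =>
          induction j using Fin.cases with
          | zero => rfl
          | succ j =>
            simp only [hf, Fin.cases_zero, Fin.cases_succ] at hij
            exfalso
            have h1 : (outN a, snk) ∈ used := hsnkmem
            have h2 : (outN (c' j), snk) ∈ F₂ := hsnk' j
            rw [← hij] at h2
            exact (Finset.mem_sdiff.1 h2).2 h1
        | succ i =>
          induction j using Fin.cases with
          | zero =>
            simp only [hf, Fin.cases_zero, Fin.cases_succ] at hij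
            exfalso
            have h1 : (outN a, snk) ∈ used := hsnkmem
            have h2 : (outN (c' i), snk) ∈ F₂ := hsnk' i
            rw [hij] at h2
            exact (Finset.mem_sdiff.1 h2).2 h1
          | succ j =>
            simp only [hf, Fin.cases_succ] at hij
            rw [hinj' hij]
      · intro i
        induction i using Fin.cases with
        | zero => simpa only [hf, Fin.cases_zero] using haA
        | succ i => simpa only [hf, Fin.cases_succ] using hA' i
      · intro i
        induction i using Fin.cases with
        | zero => exact hr0path
        | succ i => exact hpath' i
      · intro i j hij x hxi hxj
        have key : ∀ (jj : Fin m') (x : V), x ∈ (SimpleGraph.Walk.cons hadj w2).support →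
            x ∈ (r' jj).support → x = u := by
          intro jj x hx1 hx2
          rw [SimpleGraph.Walk.support_cons, List.mem_cons] at hx1
          rcases hx1 with rfl | hx1
          · rfl
          · rcases hsupp' jj x hx2 with h | h
            · exact h
            · exact absurd rfl (hisol x hx1 _ h).1
        induction i using Fin.cases with
        | zero =>
          induction j using Fin.cases with
          | zero => exact absurd rfl hij
          | succ j =>
            simp only [hf, Fin.cases_zero, Fin.cases_succ] at hxi hxj
            exact key j x hxi hxj
        | succ i =>
          induction j using Fin.cases with
          | zero =>
            simp only [hf, Fin.cases_zero, Fin.cases_succ] at hxi hxj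
            exact key i x hxj hxi
          | succ j =>
            simp only [hf, Fin.cases_succ] at hxi hxj
            exact hdisj' i j (by simpa using hij) x hxi hxj
      · intro i
        induction i using Fin.cases with
        | zero =>
          intro x hx hxA
          have hx' : x ∈ (SimpleGraph.Walk.cons hadj w2).support := by
            exact hx
          rw [SimpleGraph.Walk.support_cons, List.mem_cons] at hx'
          have hxa : x = a := by
            rcases hx' with rfl | hx'
            · exact absurd hxA hu
            · exact hAend x hx' hxA
          simpa only [hf, Fin.cases_zero] using hxa
        | succ i =>
          simp only [hf, Fin.cases_succ]
          exact hAend' i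
      · intro i
        induction i using Fin.cases with
        | zero =>
          intro x hx
          have hx' : x ∈ (SimpleGraph.Walk.cons hadj w2).support := by
            exact hx
          rw [SimpleGraph.Walk.support_cons, List.mem_cons] at hx'
          rcases hx' with rfl | hx'
          · exact Or.inl rfl
          · exact Or.inr (husubF (hsupparc x hx'))
        | succ i =>
          simp only [hf, Fin.cases_succ]
          intro x hx
          rcases hsupp' i x hx with h | h
          · exact Or.inl h
          · exact Or.inr (hF₂subF h)
      · intro i
        induction i using Fin.cases with
        | zero =>
          simp only [hf, Fin.cases_zero]
          exact husubF hsnkmem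
        | succ i =>
          simp only [hf, Fin.cases_succ]
          exact hF₂subF (hsnk' i)
      · intro x hx
        have hx1 : (outN x, snk) ∈ F₁ := by
          rw [hF₁, Finset.mem_erase]
          exact ⟨by simp [Prod.ext_iff], hx⟩
        by_cases hxu : (outN x, snk) ∈ used
        · exact ⟨0, by simp only [hf, Fin.cases_zero]; exact (hsnkuniq x hxu).symm⟩
        · obtain ⟨i, hi⟩ := hcov' x (Finset.mem_sdiff.2 ⟨hx1, hxu⟩)
          exact ⟨i.succ, by simp only [hf, Fin.cases_succ]; exact hi⟩

/-- The arcs corresponding to the tail of a fan path (everything after `u`). -/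
def tArcsL {G : SimpleGraph V} : ∀ {s e : V}, G.Walk s e → List (N V × N V)
  | s, _, SimpleGraph.Walk.nil => [(inN s, outN s), (outN s, snk)]
  | s, _, SimpleGraph.Walk.cons (v := z) _ t => (inN s, outN s) :: (outN s, inN z) :: tArcsL t

lemma tArcs_no_touch {s e : V} (w : G.Walk s e)
    (spec2 : ∀ p ∈ tArcsL w, (∃ x ∈ w.support, p.1 = inN x ∨ p.1 = outN x) ∧
      (p.2 = snk ∨ ∃ x ∈ w.support, p.2 = inN x ∨ p.2 = outN x))
    (y : V) (hy : y ∉ w.support) :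
    ∀ p ∈ tArcsL w, p.1 ≠ inN y ∧ p.1 ≠ outN y ∧ p.2 ≠ inN y ∧ p.2 ≠ outN y := by
  intro p hp
  obtain ⟨⟨x1, hx1, hx1'⟩, h2⟩ := spec2 p hp
  refine ⟨?_, ?_, ?_, ?_⟩
  · intro h
    rcases hx1' with h' | h'
    · exact hy ((inN_inj.1 (h' ▸ h : inN x1 = inN y)) ▸ hx1)
    · exact outN_ne_inN (h' ▸ h : outN x1 = inN y)
  · intro h
    rcases hx1' with h' | h'
    · exact inN_ne_outN (h' ▸ h : inN x1 = outN y)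
    · exact hy ((outN_inj.1 (h' ▸ h : outN x1 = outN y)) ▸ hx1)
  · intro h
    rcases h2 with h' | ⟨x2, hx2, hx2'⟩
    · exact snk_ne_inN (h' ▸ h : (snk : N V) = inN y)
    rcases hx2' with h'' | h''
    · exact hy ((inN_inj.1 (h'' ▸ h : inN x2 = inN y)) ▸ hx2)
    · exact outN_ne_inN (h'' ▸ h : outN x2 = inN y)
  · intro h
    rcases h2 with h' | ⟨x2, hx2, hx2'⟩
    · exact snk_ne_outN (h' ▸ h : (snk : N V) = outN y)
    rcases hx2' with h'' | h''
    · exact inN_ne_outN (h'' ▸ h : inN x2 = outN y)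
    · exact hy ((outN_inj.1 (h'' ▸ h : outN x2 = outN y)) ▸ hx2)

lemma deg_zeros_of_no_touch {L : List (N V × N V)} {y : V}
    (h : ∀ p ∈ L, p.1 ≠ inN y ∧ p.1 ≠ outN y ∧ p.2 ≠ inN y ∧ p.2 ≠ outN y) :
    outdeg L.toFinset (inN y) = 0 ∧ outdeg L.toFinset (outN y) = 0 ∧
    indeg L.toFinset (inN y) = 0 ∧ indeg L.toFinset (outN y) = 0 := by
  refine ⟨outdeg_eq_zero_iff.2 ?_, outdeg_eq_zero_iff.2 ?_,
    indeg_eq_zero_iff.2 ?_, indeg_eq_zero_iff.2 ?_⟩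
  · intro w hw
    rw [List.mem_toFinset] at hw
    exact (h _ hw).1 rfl
  · intro w hw
    rw [List.mem_toFinset] at hw
    exact (h _ hw).2.1 rfl
  · intro w hw
    rw [List.mem_toFinset] at hw
    exact (h _ hw).2.2.1 rfl
  · intro w hw
    rw [List.mem_toFinset] at hw
    exact (h _ hw).2.2.2 rfl

lemma tArcs_spec : ∀ {s e : V} (w : G.Walk s e),
    (∀ x ∈ w.support, x ≠ u) → (∀ x ∈ w.support, x ∈ A → x = e) → e ∈ A →
    w.support.Nodup →
    (∀ p ∈ tArcsL w, IsArc G u A p.1 p.2) ∧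
    (∀ p ∈ tArcsL w, (∃ x ∈ w.support, p.1 = inN x ∨ p.1 = outN x) ∧
        (p.2 = snk ∨ ∃ x ∈ w.support, p.2 = inN x ∨ p.2 = outN x)) ∧
    (∀ x ∈ w.support, outdeg (tArcsL w).toFinset (inN x) = 1 ∧
        outdeg (tArcsL w).toFinset (outN x) = 1 ∧
        indeg (tArcsL w).toFinset (outN x) = 1 ∧
        indeg (tArcsL w).toFinset (inN x) = (if x = s then 0 else 1)) ∧
    indeg (tArcsL w).toFinset snk = 1 := by
  intro s e w
  induction w with
  | nil =>
    rename_i s0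
    intro hnu hA he hnodup
    have hsu : s0 ≠ u := hnu s0 (by simp)
    refine ⟨?_, ?_, ?_, ?_⟩
    · intro p hp
      simp only [tArcsL, List.mem_cons, List.not_mem_nil, or_false] at hp
      rcases hp with rfl | rfl
      · exact ⟨rfl, hsu⟩
      · exact he
    · intro p hp
      simp only [tArcsL, List.mem_cons, List.not_mem_nil, or_false] at hp
      rcases hp with rfl | rfl
      · exact ⟨⟨s0, by simp, Or.inl rfl⟩, Or.inr ⟨s0, by simp, Or.inr rfl⟩⟩
      · exact ⟨⟨s0, by simp, Or.inr rfl⟩, Or.inl rfl⟩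
    · intro x hx
      simp only [SimpleGraph.Walk.support_nil, List.mem_singleton] at hx
      subst hx
      have hne : ((inN x, outN x) : N V × N V) ≠ (outN x, snk) := by
        simp [Prod.ext_iff]
      refine ⟨?_, ?_, ?_, ?_⟩ <;>
        · simp only [tArcsL, List.toFinset_cons, List.toFinset_nil, LawfulSingleton.insert_empty_eq,
            outdeg, indeg, Finset.filter_insert, Finset.filter_singleton]
          simp [hne]
    · simp only [tArcsL, List.toFinset_cons, List.toFinset_nil, LawfulSingleton.insert_empty_eq,
        indeg, Finset.filter_insert, Finset.filter_singleton]
      simp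
  | cons hadj t ih =>
    rename_i x z e'
    intro hnu hA he hnodup
    rw [SimpleGraph.Walk.support_cons] at hnu hA hnodup
    have hxnotin : x ∉ t.support := (List.nodup_cons.1 hnodup).1
    obtain ⟨ihV, ihP, ihD, ihS⟩ := ih
      (fun y hy => hnu y (List.mem_cons_of_mem _ hy))
      (fun y hy => hA y (List.mem_cons_of_mem _ hy)) he
      (List.nodup_cons.1 hnodup).2
    have hxu : x ≠ u := hnu x (List.mem_cons_self)
    have hzu : z ≠ u := hnu z (List.mem_cons_of_mem _ t.start_mem_support)
    have hzx : z ≠ x := fun h => hxnotin (h ▸ t.start_mem_support)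
    have hxA : x ∉ A := by
      intro hxa
      have := hA x (List.mem_cons_self) hxa
      subst this
      exact hxnotin t.end_mem_support
    have hnotouch := tArcs_no_touch t ihP x hxnotin
    obtain ⟨hz1, hz2, hz3, hz4⟩ := deg_zeros_of_no_touch hnotouch
    have hnot1 : ((inN x, outN x) : N V × N V) ∉ (tArcsL t).toFinset := by
      intro hm
      rw [List.mem_toFinset] at hm
      exact (hnotouch _ hm).1 rfl
    have hnot2 : ((outN x, inN z) : N V × N V) ∉ (tArcsL t).toFinset := by
      intro hm
      rw [List.mem_toFinset] at hm
      exact (hnotouch _ hm).2.1 rfl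
    have hne12 : ((inN x, outN x) : N V × N V) ≠ (outN x, inN z) := by
      simp [Prod.ext_iff]
    have harcs : tArcsL (SimpleGraph.Walk.cons hadj t) =
        (inN x, outN x) :: (outN x, inN z) :: tArcsL t := rfl
    have hfin : (tArcsL (SimpleGraph.Walk.cons hadj t)).toFinset =
        insert (inN x, outN x) (insert (outN x, inN z) (tArcsL t).toFinset) := by
      rw [harcs]; simp
    have hnot1' : ((inN x, outN x) : N V × N V) ∉ insert (outN x, inN z) (tArcsL t).toFinset := by
      rw [Finset.mem_insert]
      rintro (h | h)
      · exact hne12 h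
      · exact hnot1 h
    refine ⟨?_, ?_, ?_, ?_⟩
    · intro p hp
      rw [harcs] at hp
      rcases List.mem_cons.1 hp with rfl | hp
      · exact ⟨rfl, hxu⟩
      rcases List.mem_cons.1 hp with rfl | hp
      · exact ⟨hadj, hxA, hxu, hzu⟩
      · exact ihV p hp
    · intro p hp
      rw [harcs] at hp
      rw [SimpleGraph.Walk.support_cons]
      rcases List.mem_cons.1 hp with rfl | hp
      · exact ⟨⟨x, by simp, Or.inl rfl⟩, Or.inr ⟨x, by simp, Or.inr rfl⟩⟩
      rcases List.mem_cons.1 hp with rfl | hp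
      · exact ⟨⟨x, by simp, Or.inr rfl⟩,
          Or.inr ⟨z, List.mem_cons_of_mem _ t.start_mem_support, Or.inl rfl⟩⟩
      · obtain ⟨⟨y, hy, hy'⟩, h2⟩ := ihP p hp
        refine ⟨⟨y, List.mem_cons_of_mem _ hy, hy'⟩, ?_⟩
        rcases h2 with h2 | ⟨y2, hy2, hy2'⟩
        · exact Or.inl h2
        · exact Or.inr ⟨y2, List.mem_cons_of_mem _ hy2, hy2'⟩
    · intro y hy
      rw [SimpleGraph.Walk.support_cons, List.mem_cons] at hy
      rw [hfin]
      rcases hy with rfl | hy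
      · refine ⟨?_, ?_, ?_, ?_⟩
        · rw [outdeg_insert_of_eq (z := inN y) hnot1' rfl,
            outdeg_insert_of_ne (z := inN y) (by exact outN_ne_inN),
            hz1]
        · rw [outdeg_insert_of_ne (z := outN y) (by exact inN_ne_outN),
            outdeg_insert_of_eq (z := outN y) hnot2 rfl, hz2]
        · rw [indeg_insert_of_eq (z := outN y) hnot1' rfl,
            indeg_insert_of_ne (z := outN y) (by exact inN_ne_outN), hz4]
        · rw [if_pos rfl,
            indeg_insert_of_ne (z := inN y) (by exact outN_ne_inN),
            indeg_insert_of_ne (z := inN y) (by exact fun h => hzx (inN_inj.1 h)), hz3]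
      · have hyx : y ≠ x := fun h => hxnotin (h ▸ hy)
        obtain ⟨d1, d2, d3, d4⟩ := ihD y hy
        refine ⟨?_, ?_, ?_, ?_⟩
        · rw [outdeg_insert_of_ne (z := inN y) (by exact fun h => hyx (inN_inj.1 h).symm),
            outdeg_insert_of_ne (z := inN y) (by exact outN_ne_inN), d1]
        · rw [outdeg_insert_of_ne (z := outN y) (by exact inN_ne_outN),
            outdeg_insert_of_ne (z := outN y) (by exact fun h => hyx (outN_inj.1 h).symm), d2]
        · rw [indeg_insert_of_ne (z := outN y) (by exact fun h => hyx (outN_inj.1 h).symm),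
            indeg_insert_of_ne (z := outN y) (by exact inN_ne_outN), d3]
        · rw [indeg_insert_of_ne (z := inN y) (by exact outN_ne_inN), if_neg hyx]
          by_cases hyz : y = z
          · subst hyz
            rw [indeg_insert_of_eq (z := inN y) hnot2 rfl, d4, if_pos rfl]
          · rw [indeg_insert_of_ne (z := inN y) (by exact fun h => hyz (inN_inj.1 h).symm),
              d4, if_neg hyz]
    · rw [hfin,
        indeg_insert_of_ne (z := KSAux.snk) (by exact outN_ne_snk),
        indeg_insert_of_ne (z := KSAux.snk) (by exact inN_ne_snk)]
      exact ihS

lemma tArcs_snk_mem : ∀ {s e : V} (w : G.Walk s e), ((outN e, snk) : N V × N V) ∈ tArcsL w := by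
  intro s e w
  induction w with
  | nil => simp [tArcsL]
  | cons hadj t ih => exact List.mem_cons_of_mem _ (List.mem_cons_of_mem _ ih)

lemma node_cases (z : N V) : z = src ∨ z = snk ∨ ∃ y : V, z = inN y ∨ z = outN y := by
  match z with
  | none => exact Or.inl rfl
  | some none => exact Or.inr (Or.inl rfl)
  | some (some (y, false)) => exact Or.inr (Or.inr ⟨y, Or.inl rfl⟩)
  | some (some (y, true)) => exact Or.inr (Or.inr ⟨y, Or.inr rfl⟩)

lemma outdeg_biUnion {ι : Type*} [DecidableEq ι] (S : Finset ι) (f : ι → Finset (N V × N V))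
    (hdisj : ∀ i ∈ S, ∀ j ∈ S, i ≠ j → Disjoint (f i) (f j)) (z : N V) :
    outdeg (S.biUnion f) z = ∑ i ∈ S, outdeg (f i) z := by
  unfold outdeg
  rw [Finset.filter_biUnion, Finset.card_biUnion]
  intro i hi j hj hij
  exact Finset.disjoint_filter_filter (hdisj i hi j hj hij)

lemma indeg_biUnion {ι : Type*} [DecidableEq ι] (S : Finset ι) (f : ι → Finset (N V × N V))
    (hdisj : ∀ i ∈ S, ∀ j ∈ S, i ≠ j → Disjoint (f i) (f j)) (z : N V) :
    indeg (S.biUnion f) z = ∑ i ∈ S, indeg (f i) z := by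
  unfold indeg
  rw [Finset.filter_biUnion, Finset.card_biUnion]
  intro i hi j hj hij
  exact Finset.disjoint_filter_filter (hdisj i hi j hj hij)

lemma fan_to_flow [Fintype V] {n : ℕ} (hu : u ∉ A) (b : Fin n → V)
    (hb : Function.Injective b) (hbA : ∀ i, b i ∈ A) (q : ∀ i, G.Walk u (b i))
    (hq1 : ∀ i, (q i).IsPath)
    (hq2 : ∀ i j, i ≠ j → ∀ x, x ∈ (q i).support → x ∈ (q j).support → x = u ∨ x = b j)
    (hqA : ∀ i, ∀ x ∈ (q i).support, x ∈ A → x = b i) :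
    ∃ F : Finset (N V × N V), Valid G u A F ∧ Conserv F ∧ outdeg F src = n ∧
      ∀ i, (outN (b i), snk) ∈ F := by
  classical
  have hne : ∀ i, u ≠ b i := fun i h => hu (h ▸ hbA i)
  choose v hadj t hqt using fun i => SimpleGraph.Walk.exists_eq_cons_of_ne (hne i) (q i)
  have hsupp : ∀ i, (q i).support = u :: (t i).support := by
    intro i; rw [hqt i, SimpleGraph.Walk.support_cons]
  have hnodup : ∀ i, (u :: (t i).support).Nodup := by
    intro i
    rw [← hsupp i]
    exact (hq1 i).support_nodup
  have htu : ∀ i, ∀ x ∈ (t i).support, x ≠ u := by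
    intro i x hx h
    exact (List.nodup_cons.1 (hnodup i)).1 (h ▸ hx)
  have htmem : ∀ i, ∀ x ∈ (t i).support, x ∈ (q i).support := by
    intro i x hx
    rw [hsupp i]
    exact List.mem_cons_of_mem _ hx
  have htA : ∀ i, ∀ x ∈ (t i).support, x ∈ A → x = b i :=
    fun i x hx hxA => hqA i x (htmem i x hx) hxA
  have hdisjt : ∀ i j, i ≠ j → ∀ x, x ∈ (t i).support → x ∉ (t j).support := by
    intro i j hij x hxi hxj
    rcases hq2 i j hij x (htmem i x hxi) (htmem j x hxj) with h | h
    · exact htu i x hxi h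
    · have := htA i x hxi (h ▸ hbA j)
      rw [this] at h
      exact hij (hb h.symm).symm
  have hspec := fun i => tArcs_spec (t i) (htu i) (htA i) (hbA i)
    (List.nodup_cons.1 (hnodup i)).2
  set L : Fin n → Finset (N V × N V) :=
    fun i => insert (src, inN (v i)) (tArcsL (t i)).toFinset with hL
  have hvmem : ∀ i, v i ∈ (t i).support := fun i => (t i).start_mem_support
  have hsrcnot : ∀ i, ((src, inN (v i)) : N V × N V) ∉ (tArcsL (t i)).toFinset := by
    intro i hm
    rw [List.mem_toFinset] at hm
    obtain ⟨⟨x, -, hx'⟩, -⟩ := (hspec i).2.1 _ hm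
    rcases hx' with h | h
    · exact src_ne_inN h
    · exact src_ne_outN h
  have hLdisj : ∀ i j, i ≠ j → Disjoint (L i) (L j) := by
    intro i j hij
    rw [Finset.disjoint_left]
    intro p hpi hpj
    rw [hL, Finset.mem_insert] at hpi hpj
    rcases hpi with rfl | hpi
    · rcases hpj with h | hpj
      · rw [Prod.ext_iff] at h
        exact hdisjt i j hij (v i) (hvmem i) (by rw [inN_inj.1 h.2]; exact hvmem j)
      · rw [List.mem_toFinset] at hpj
        obtain ⟨⟨x, -, hx'⟩, -⟩ := (hspec j).2.1 _ hpj
        rcases hx' with h | h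
        · exact src_ne_inN h
        · exact src_ne_outN h
    · rw [List.mem_toFinset] at hpi
      obtain ⟨⟨x, hx, hx'⟩, -⟩ := (hspec i).2.1 _ hpi
      have hxj : x ∉ (t j).support := hdisjt i j hij x hx
      rcases hpj with rfl | hpj
      · rcases hx' with h | h
        · exact src_ne_inN (h : (src : N V) = _)
        · exact src_ne_outN (h : (src : N V) = _)
      · rw [List.mem_toFinset] at hpj
        have := tArcs_no_touch (t j) (hspec j).2.1 x hxj _ hpj
        rcases hx' with h | h
        · exact this.1 h
        · exact this.2.1 h
  refine ⟨Finset.univ.biUnion L, ?_, ?_, ?_, ?_⟩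
  · intro p hp
    obtain ⟨i, -, hpi⟩ := Finset.mem_biUnion.1 hp
    rw [hL, Finset.mem_insert] at hpi
    rcases hpi with rfl | hpi
    · exact hadj i
    · rw [List.mem_toFinset] at hpi
      exact (hspec i).1 p hpi
  · -- conservation
    intro z hzsrc hzsnk
    rw [outdeg_biUnion _ _ (fun i _ j _ hij => hLdisj i j hij),
      indeg_biUnion _ _ (fun i _ j _ hij => hLdisj i j hij)]
    rcases node_cases z with rfl | h
    · exact absurd rfl hzsrc
    rcases h with rfl | ⟨y, hy⟩
    · exact absurd rfl hzsnk
    apply Finset.sum_congr rfl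
    intro i _
    by_cases hyi : y ∈ (t i).support
    · obtain ⟨d1, d2, d3, d4⟩ := (hspec i).2.2.1 y hyi
      rcases hy with rfl | rfl
      · rw [hL]
        rw [outdeg_insert_of_ne (z := inN y) (by exact src_ne_inN), d1]
        by_cases hyv : y = v i
        · subst hyv
          rw [indeg_insert_of_eq (z := inN (v i)) (hsrcnot i) rfl, d4, if_pos rfl]
        · rw [indeg_insert_of_ne (z := inN y) (by exact fun h => hyv (inN_inj.1 h).symm),
            d4, if_neg hyv]
      · rw [hL, outdeg_insert_of_ne (z := outN y) (by exact src_ne_outN),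
          indeg_insert_of_ne (z := outN y) (by exact inN_ne_outN), d2, d3]
    · have hnt := tArcs_no_touch (t i) (hspec i).2.1 y hyi
      obtain ⟨z1, z2, z3, z4⟩ := deg_zeros_of_no_touch hnt
      rcases hy with rfl | rfl
      · rw [hL, outdeg_insert_of_ne (z := inN y) (by exact src_ne_inN),
          indeg_insert_of_ne (z := inN y)
            (by exact fun h => hyi ((inN_inj.1 h) ▸ hvmem i)), z1, z3]
      · rw [hL, outdeg_insert_of_ne (z := outN y) (by exact src_ne_outN),
          indeg_insert_of_ne (z := outN y) (by exact inN_ne_outN), z2, z4]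
  · rw [outdeg_biUnion _ _ (fun i _ j _ hij => hLdisj i j hij)]
    have : ∀ i : Fin n, outdeg (L i) src = 1 := by
      intro i
      rw [hL, outdeg_insert_of_eq (z := KSAux.src) (hsrcnot i) rfl]
      have h0 : outdeg (tArcsL (t i)).toFinset src = 0 := by
        apply outdeg_eq_zero_iff.2
        intro y hy
        rw [List.mem_toFinset] at hy
        obtain ⟨⟨x, -, hx'⟩, -⟩ := (hspec i).2.1 _ hy
        rcases hx' with h | h
        · exact src_ne_inN h
        · exact src_ne_outN h
      rw [h0]
    simp [this, Finset.card_univ]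
  · intro i
    apply Finset.mem_biUnion.2 ⟨i, Finset.mem_univ i, ?_⟩
    rw [hL]
    apply Finset.mem_insert_of_mem
    rw [List.mem_toFinset]
    exact tArcs_snk_mem (t i)

lemma exists_perm_extend {k n : ℕ} (f g : Fin k → Fin n)
    (hf : Function.Injective f) (hg : Function.Injective g) :
    ∃ σ : Equiv.Perm (Fin n), ∀ i, σ (f i) = g i := by
  classical
  have hcard : Fintype.card ↥(Set.range f)ᶜ = Fintype.card ↥(Set.range g)ᶜ := by
    rw [Fintype.card_compl_set, Fintype.card_compl_set,
      Set.card_range_of_injective hf, Set.card_range_of_injective hg]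
  refine ⟨((Equiv.Set.sumCompl (Set.range f)).symm.trans
    (((Equiv.ofInjective f hf).symm.trans (Equiv.ofInjective g hg)).sumCongr
      (Fintype.equivOfCardEq hcard))).trans (Equiv.Set.sumCompl (Set.range g)), ?_⟩
  intro i
  simp only [Equiv.trans_apply]
  rw [Equiv.Set.sumCompl_symm_apply_of_mem (Set.mem_range_self i)]
  simp only [Equiv.sumCongr_apply, Sum.map_inl, Equiv.trans_apply]
  rw [show (⟨f i, Set.mem_range_self i⟩ : Set.range f) = Equiv.ofInjective f hf i from rfl,
    Equiv.symm_apply_apply]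
  exact Equiv.Set.sumCompl_apply_inl (Set.range g) _

end KSAux

end

namespace KS

variable {V : Type*} {W : Type*}

/-- Delete a set of vertices: keep the vertex type, remove all edges meeting `S`
(the vertices of `S` become isolated). -/
def delV (G : SimpleGraph V) (S : Set V) : SimpleGraph V where
  Adj x y := G.Adj x y ∧ x ∉ S ∧ y ∉ S
  symm := ⟨fun _ _ h => ⟨h.1.symm, h.2.2, h.2.1⟩⟩
  loopless := ⟨fun x h => G.irrefl h.1⟩

/-- `G` contains (a copy of) `H` as a subgraph. -/
def Contains (H : SimpleGraph W) (G : SimpleGraph V) : Prop :=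
  ∃ f : W ↪ V, ∀ u v, H.Adj u v → G.Adj (f u) (f v)

/-- `K₄⁻` : the complete graph on four vertices minus one edge. -/
def K4minus : SimpleGraph (Fin 4) := (completeGraph (Fin 4)).deleteEdges {s(0, 1)}

/-- `f`, together with the family of paths `p`, is a subdivision of `H` inside `G`:
`f` maps the branch vertices injectively, each edge of `H` is replaced by a path of `G`,
whose internal vertices avoid branch vertices, and paths of distinct edges meet only in
common branch vertices. -/
def IsSubdivEmbed (H : SimpleGraph W) (G : SimpleGraph V) (f : W → V)
    (p : ∀ ⦃u v : W⦄, H.Adj u v → G.Walk (f u) (f v)) : Prop :=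
  Function.Injective f ∧
  (∀ ⦃u v : W⦄ (h : H.Adj u v), (p h).IsPath) ∧
  (∀ ⦃u v : W⦄ (h : H.Adj u v) (w : W), f w ∈ (p h).support → w = u ∨ w = v) ∧
  (∀ ⦃u v : W⦄ (h : H.Adj u v) ⦃u' v' : W⦄ (h' : H.Adj u' v'),
    s(u, v) ≠ s(u', v') → ∀ x, x ∈ (p h).support → x ∈ (p h').support →
      x = f u ∨ x = f v)

/-- `G` contains a subdivision of `H`. -/
def ContainsSubdiv (H : SimpleGraph W) (G : SimpleGraph V) : Prop :=
  ∃ f p, IsSubdivEmbed H G f p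

/-- `G` contains a `TK₅`. -/
def ContainsTK5 (G : SimpleGraph V) : Prop :=
  ContainsSubdiv (completeGraph (Fin 5)) G

/-- `G` contains a `TK₅` in which `a` is not a branch vertex. -/
def ContainsTK5Avoiding (G : SimpleGraph V) (a : V) : Prop :=
  ∃ f p, IsSubdivEmbed (completeGraph (Fin 5)) G f p ∧ a ∉ Set.range f

/-- Planarity, via Kuratowski's characterization: no subdivision of `K₅` nor of `K₃,₃`. -/
def Planar (G : SimpleGraph V) : Prop :=
  ¬ ContainsSubdiv (completeGraph (Fin 5)) G ∧
  ¬ ContainsSubdiv (completeBipartiteGraph (Fin 3) (Fin 3)) G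

/-- The cone over `G` with apex a new vertex joined to every vertex in `A`. -/
def cone (G : SimpleGraph V) (A : Set V) : SimpleGraph (Option V) :=
  SimpleGraph.fromRel (fun x y =>
    (∃ u v, x = some u ∧ y = some v ∧ G.Adj u v) ∨ (∃ u, x = some u ∧ y = none ∧ u ∈ A))

/-- `(G, A)` is planar: `G` has a plane drawing in which the vertices of `A` are incident
with a common face.  (Equivalently: the cone over `A` is planar.) -/
def PlanarIn (G : SimpleGraph V) (A : Set V) : Prop := Planar (cone G A)

/-- The edges of the cycle running through the list `l` in order. -/
def cycleEdges (l : List V) : Set (Sym2 V) :=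
  { e | ∃ (i : ℕ) (h : i < l.length),
      e = s(l.get ⟨i, h⟩,
            l.get ⟨(i + 1) % l.length, Nat.mod_lt _ (Nat.lt_of_le_of_lt (Nat.zero_le i) h)⟩) }

/-- `(G, a₁, …, a_k)` (with `l = [a₁, …, a_k]`) is planar: `G` can be drawn in a closed disc
with no edge crossings such that `a₁, …, a_k` occur on the boundary of the disc in this
cyclic order.  (Equivalently: adding the boundary cycle and a new vertex joined to all of
`a₁, …, a_k` yields a planar graph.) -/
def DiscPlanar (G : SimpleGraph V) (l : List V) : Prop :=
  Planar (cone (G ⊔ SimpleGraph.fromEdgeSet (cycleEdges l)) {v | v ∈ l})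

/-- `(G1, G2)` is a separation of `G`. -/
def IsSeparation (G : SimpleGraph V) (G1 G2 : G.Subgraph) : Prop :=
  G1.edgeSet ∪ G2.edgeSet = G.edgeSet ∧ (G1 ⊓ G2).edgeSet = ∅ ∧ ¬ G1 ≤ G2 ∧ ¬ G2 ≤ G1

/-- `(G1, G2)` is a separation of `G` of order `k`. -/
def IsKSeparation (G : SimpleGraph V) (G1 G2 : G.Subgraph) (k : ℕ) : Prop :=
  IsSeparation G G1 G2 ∧ (G1.verts ∩ G2.verts).ncard = k

/-- `G` is `k`-connected: more than `k` vertices, and deleting fewer than `k` vertices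
leaves it connected. -/
def KConnected (G : SimpleGraph V) (k : ℕ) : Prop :=
  k < Nat.card V ∧ ∀ S : Set V, S.Finite → S.ncard < k → (G.induce Sᶜ).Connected

/-- `G` is `(k, A)`-connected: for every cut `T` with `|T| < k`, every component of
`G − T` contains a vertex of `A`. -/
def KAConnected (G : SimpleGraph V) (k : ℕ) (A : Set V) : Prop :=
  ∀ T : Set V, T.Finite → T.ncard < k →
    ∀ C : (G.induce Tᶜ).ConnectedComponent, ∃ v, v ∈ C.supp ∧ (v : V) ∈ A

/-- A family of paths is independent: no vertex of any path is an internal vertex of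
another path of the family. -/
def IndepWalks (G : SimpleGraph V) {n : ℕ} (s t : Fin n → V)
    (p : ∀ i, G.Walk (s i) (t i)) : Prop :=
  (∀ i, (p i).IsPath) ∧
  ∀ i j, i ≠ j → ∀ x, x ∈ (p i).support → x ∈ (p j).support → x = s j ∨ x = t j

/-- The edge set of the graph obtained from the edge-disjoint union of the 8-cycle
`a₁b₁a₂b₂a₃b₃a₄b₄a₁` and the 4-cycle `b₁b₂b₃b₄b₁` by adding `a` and the edges `a bᵢ`. -/
def wheelEdges (a a1 a2 a3 a4 b1 b2 b3 b4 : V) : Set (Sym2 V) :=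
  {s(a1, b1), s(b1, a2), s(a2, b2), s(b2, a3), s(a3, b3), s(b3, a4), s(a4, b4), s(b4, a1),
   s(b1, b2), s(b2, b3), s(b3, b4), s(b4, b1), s(a, b1), s(a, b2), s(a, b3), s(a, b4)}

/-- Outcome (iii) of Theorems 1.1, 1.2 and Proposition 4.2: `G` has a 5-separation
`(G1', G2')` with `V(G1' ∩ G2') = {a, a₁, a₂, a₃, a₄}` where `G2'` is the special
"wheel-like" graph on nine vertices. -/
def SpecialSeparation (G : SimpleGraph V) (a : V) : Prop :=
  ∃ (G1' G2' : G.Subgraph) (a1 a2 a3 a4 b1 b2 b3 b4 : V),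
    IsKSeparation G G1' G2' 5 ∧
    [a, a1, a2, a3, a4, b1, b2, b3, b4].Nodup ∧
    G1'.verts ∩ G2'.verts = {a, a1, a2, a3, a4} ∧
    G2'.verts = {a, a1, a2, a3, a4, b1, b2, b3, b4} ∧
    G2'.edgeSet = wheelEdges a a1 a2 a3 a4 b1 b2 b3 b4

/-- `G − {av : v ∉ keep}` : delete all edges at `a` going outside `keep`. -/
def starDelete (G : SimpleGraph V) (a : V) (keep : Set V) : SimpleGraph V :=
  G.deleteEdges {e | ∃ v, e = s(a, v) ∧ v ∉ keep}


/-- Combinatorial data of a plane drawing of `G`: a finite set `F` of faces, with each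
edge lying on faces with total multiplicity two (a cut edge can lie twice on one face),
satisfying Euler's formula. -/
structure PlaneEmb (G : SimpleGraph V) (F : Type*) [Fintype F] where
  einc : F → Sym2 V → ℕ
  einc_le : ∀ f e, einc f e ≤ 2
  einc_edge : ∀ f e, einc f e ≠ 0 → e ∈ G.edgeSet
  einc_total : ∀ e ∈ G.edgeSet, ∑ f, einc f e = 2
  euler : (Nat.card V : ℤ) - (G.edgeSet.ncard : ℤ) + (Nat.card F : ℤ) =
    1 + (Nat.card G.ConnectedComponent : ℤ)

/-- The number of edges incident with a face (cut edges counted twice). -/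
def PlaneEmb.faceDeg [Fintype V] [DecidableEq V] {G : SimpleGraph V} {F : Type*} [Fintype F]
    (emb : PlaneEmb G F) (f : F) : ℕ :=
  ∑ e : Sym2 V, emb.einc f e

/-- A vertex is incident with a face. -/
def PlaneEmb.Inc {G : SimpleGraph V} {F : Type*} [Fintype F]
    (emb : PlaneEmb G F) (v : V) (f : F) : Prop :=
  ∃ e, emb.einc f e ≠ 0 ∧ v ∈ e

/-- Two vertices are cofacial: incident with a common face. -/
def PlaneEmb.Cofacial {G : SimpleGraph V} {F : Type*} [Fintype F]
    (emb : PlaneEmb G F) (v w : V) : Prop :=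
  ∃ f, emb.Inc v f ∧ emb.Inc w f

/-- The set `S` induces a cycle in `G`. -/
def InducesCycle (G : SimpleGraph V) (S : Set V) : Prop :=
  ∃ (u : V) (c : G.Walk u u), c.IsCycle ∧ {x | x ∈ c.support} = S ∧
    ∀ x y, x ∈ S → y ∈ S → G.Adj x y → s(x, y) ∈ c.edges

/-- The vertices of the list `l` occur, in this cyclic order, on the cycle of `G` with
vertex set `D` (traversed from some basepoint in one of the two directions). -/
def CyclicallyOnCycle (G : SimpleGraph V) (D : Set V) (l : List V) : Prop :=
  ∃ (u : V) (c : G.Walk u u), c.IsCycle ∧ {x | x ∈ c.support} = D ∧ l.Sublist c.support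


/-- The tree `H` on six vertices: the centres `0, 1` are adjacent and of degree 3,
the leaves `2, 3` hang on `0` and the leaves `4, 5` hang on `1`. -/
def Htree : SimpleGraph (Fin 6) :=
  SimpleGraph.fromEdgeSet {s(0, 1), s(0, 2), s(0, 3), s(1, 4), s(1, 5)}

/-- `(G, u1, u2, A)` is feasible: `G` has a `TH` rooted at `u1, u2, A` (i.e. a subdivision
of `H` whose degree-3 vertices are `u1, u2` and whose degree-1 vertices are the four
vertices of `A`). -/
def Feasible (G : SimpleGraph V) (u1 u2 : V) (A : Set V) : Prop :=
  ∃ f p, IsSubdivEmbed Htree G f p ∧ f 0 = u1 ∧ f 1 = u2 ∧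
    ({f 2, f 3, f 4, f 5} : Set V) = A

/-- The common part of the definition of an obstruction, with sides `U1, U2` and middle
parts `Ap 0, …, Ap (k-1)`. -/
def IsObstruction (G : SimpleGraph V) (u1 u2 : V) (A : Set V)
    {k : ℕ} (U1 U2 : G.Subgraph) (Ap : Fin k → G.Subgraph) : Prop :=
  2 ≤ k ∧ k ≤ 4 ∧
  U1.verts ∪ U2.verts ∪ (⋃ i, (Ap i).verts) = Set.univ ∧
  (∀ i j, i ≠ j → Disjoint (Ap i).verts (Ap j).verts) ∧
  ((⊤ : G.Subgraph).deleteVerts A).edgeSet =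
    (U1.deleteVerts A).edgeSet ∪ (U2.deleteVerts A).edgeSet ∪
      ⋃ i, ((Ap i).deleteVerts A).edgeSet ∧
  Disjoint ((U1.deleteVerts A).edgeSet) ((U2.deleteVerts A).edgeSet) ∧
  (∀ i, Disjoint ((U1.deleteVerts A).edgeSet) (((Ap i).deleteVerts A).edgeSet)) ∧
  (∀ i, Disjoint ((U2.deleteVerts A).edgeSet) (((Ap i).deleteVerts A).edgeSet)) ∧
  (∀ i j, i ≠ j →
    Disjoint (((Ap i).deleteVerts A).edgeSet) (((Ap j).deleteVerts A).edgeSet)) ∧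
  (U1 ⊓ U2).verts ⊆ A ∧ A ⊆ ⋃ i, (Ap i).verts ∧
  u1 ∈ U1.verts \ (⋃ i, (Ap i).verts) ∧ u2 ∈ U2.verts \ (⋃ i, (Ap i).verts) ∧
  (∀ i, ((Ap i).verts ∩ A).Nonempty ∧
    ((Ap i).verts ∩ A).ncard ≤ ((Ap i).verts ∩ (U1.verts ∪ U2.verts)).ncard ∧
    ((Ap i).verts ∩ (U1.verts ∪ U2.verts)).ncard ≤ ((Ap i).verts ∩ A).ncard + 1) ∧
  (∀ i, 2 ≤ (Ap i).verts.ncard →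
    (Ap i).verts ∩ (U1.verts ∪ U2.verts) ∩ A = ∅ ∧
    ∀ v ∈ (Ap i).verts ∩ A, G.neighborSet v ⊆ (Ap i).verts)

def ObstructionI (G : SimpleGraph V) (u1 u2 : V) (A : Set V) : Prop :=
  ∃ (U1 U2 : G.Subgraph) (Ap : Fin 3 → G.Subgraph),
    IsObstruction G u1 u2 A U1 U2 Ap ∧
    ((Ap 0).verts ∩ A).ncard = 1 ∧ ((Ap 1).verts ∩ A).ncard = 1 ∧
    ((Ap 2).verts ∩ A).ncard = 2 ∧
    (U1 ⊓ Ap 0).verts.ncard = 1 ∧ (U1 ⊓ Ap 1).verts.ncard = 1 ∧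
    (U2 ⊓ Ap 0).verts.ncard = 1 ∧ (U2 ⊓ Ap 1).verts.ncard = 1 ∧
    (U2 ⊓ Ap 2).verts.ncard = 1 ∧
    (U1 ⊓ Ap 2).verts.ncard = 2

def ObstructionII (G : SimpleGraph V) (u1 u2 : V) (A : Set V) : Prop :=
  ∃ (U1 U2 : G.Subgraph) (Ap : Fin 2 → G.Subgraph),
    IsObstruction G u1 u2 A U1 U2 Ap ∧
    ((Ap 0).verts ∩ A).ncard = 1 ∧ ((Ap 1).verts ∩ A).ncard = 3 ∧
    (U1 ⊓ Ap 0).verts.ncard = 1 ∧ (U2 ⊓ Ap 0).verts.ncard = 1 ∧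
    (U1 ⊓ Ap 1).verts.ncard = 2 ∧ (U2 ⊓ Ap 1).verts.ncard = 2

def ObstructionIII (G : SimpleGraph V) (u1 u2 : V) (A : Set V) : Prop :=
  ∃ (U1 U2 : G.Subgraph) (Ap : Fin 2 → G.Subgraph),
    IsObstruction G u1 u2 A U1 U2 Ap ∧
    ((Ap 0).verts ∩ A).ncard = 2 ∧ ((Ap 1).verts ∩ A).ncard = 2 ∧
    (U1 ⊓ Ap 0).verts.ncard = 1 ∧ (U2 ⊓ Ap 1).verts.ncard = 1 ∧
    (U1 ⊓ Ap 1).verts.ncard = 2 ∧ (U2 ⊓ Ap 0).verts.ncard = 2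

def ObstructionIV (G : SimpleGraph V) (u1 u2 : V) (A : Set V) : Prop :=
  ∃ (U1 U2 : G.Subgraph) (Ap : Fin 4 → G.Subgraph),
    IsObstruction G u1 u2 A U1 U2 Ap ∧
    ∀ i, ((Ap i).verts ∩ A).ncard = 1 ∧
      (U1 ⊓ Ap i).verts.ncard = 1 ∧ (U2 ⊓ Ap i).verts.ncard = 1

/-- Contract the set `S` onto the vertex `a ∈ S` (the vertices of `S − {a}` become
isolated; the merged vertex is `a`). -/
def contractTo (G : SimpleGraph V) (S : Set V) (a : V) : SimpleGraph V where
  Adj x y := x ≠ y ∧ x ∉ S \ {a} ∧ y ∉ S \ {a} ∧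
    (G.Adj x y ∨ (x = a ∧ ∃ s ∈ S, G.Adj s y) ∨ (y = a ∧ ∃ s ∈ S, G.Adj x s))
  symm := by
    constructor
    rintro x y ⟨hxy, hx, hy, h⟩
    refine ⟨hxy.symm, hy, hx, ?_⟩
    rcases h with h | ⟨hxa, s, hs, h⟩ | ⟨hya, s, hs, h⟩
    · exact Or.inl h.symm
    · exact Or.inr (Or.inr ⟨hxa, s, hs, h.symm⟩)
    · exact Or.inr (Or.inl ⟨hya, s, hs, h.symm⟩)
  loopless := ⟨fun x h => h.1 rfl⟩


/-- Lemma 6.1 (Perfect): independent paths from a vertex to a set can be rerouted to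
extend a given smaller system. -/
theorem perfect_paths {V : Type*} [Fintype V] (G : SimpleGraph V) (u : V) (A : Set V)
    (hu : u ∉ A) (k n : ℕ) (hkn : k ≤ n)
    (a : Fin k → V) (ha : Function.Injective a) (haA : ∀ i, a i ∈ A)
    (p : ∀ i : Fin k, G.Walk u (a i))
    (hp : IndepWalks G (fun _ => u) a p)
    (hpA : ∀ i, ∀ x ∈ (p i).support, x ∈ A → x = a i)
    (b : Fin n → V) (hb : Function.Injective b) (hbA : ∀ i, b i ∈ A)
    (q : ∀ i : Fin n, G.Walk u (b i))
    (hq : IndepWalks G (fun _ => u) b q)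
    (hqA : ∀ i, ∀ x ∈ (q i).support, x ∈ A → x = b i) :
    ∃ (c : Fin n → V) (r : ∀ i : Fin n, G.Walk u (c i)),
      Function.Injective c ∧ (∀ i, c i ∈ A) ∧
      IndepWalks G (fun _ => u) c r ∧
      (∀ i, ∀ x ∈ (r i).support, x ∈ A → x = c i) ∧
      (∀ i : Fin k, c (Fin.castLE hkn i) = a i) := by
  classical
  obtain ⟨hppaths, hpdisj⟩ := hp
  obtain ⟨hqpaths, hqdisj⟩ := hq
  obtain ⟨Fp, hFpV, hFpC, hFpval, hFpsnk⟩ :=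
    KSAux.fan_to_flow (G := G) hu a ha haA p hppaths hpdisj hpA
  obtain ⟨Fq, hFqV, hFqC, hFqval, -⟩ :=
    KSAux.fan_to_flow (G := G) hu b hb hbA q hqpaths hqdisj hqA
  have key : ∀ (d : ℕ) (F : Finset (KSAux.N V × KSAux.N V)), KSAux.Valid G u A F →
      KSAux.Conserv F → KSAux.outdeg F KSAux.src + d = n →
      (∀ i : Fin k, (KSAux.outN (a i), KSAux.snk) ∈ F) →
      ∃ F', KSAux.Valid G u A F' ∧ KSAux.Conserv F' ∧
        KSAux.outdeg F' KSAux.src = n ∧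
        ∀ i : Fin k, (KSAux.outN (a i), KSAux.snk) ∈ F' := by
    intro d
    induction d with
    | zero =>
      intro F h1 h2 h3 h4
      exact ⟨F, h1, h2, by omega, h4⟩
    | succ d ih =>
      intro F h1 h2 h3 h4
      obtain ⟨F', g1, g2, g3, g4⟩ := KSAux.augment h1 h2 hFqV hFqC (by omega)
      exact ih F' g1 g2 (by omega) (fun i => g4 _ (h4 i))
  obtain ⟨F, hFV, hFC, hFval, hFsnk⟩ := key (n - k) Fp hFpV hFpC (by omega) hFpsnk
  obtain ⟨c, r, hcinj, hcA, hrpath, hrdisj, hrA, -, -, hccov⟩ :=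
    KSAux.flow_to_fan hu F.card n F le_rfl hFV hFC hFval
  choose d hd using fun i : Fin k => hccov (a i) (hFsnk i)
  have hdinj : Function.Injective d := fun i j hij => ha (by rw [← hd i, ← hd j, hij])
  obtain ⟨σ, hσ⟩ := KSAux.exists_perm_extend (fun i : Fin k => Fin.castLE hkn i) d
    (fun i j h => by simpa using h) hdinj
  refine ⟨fun i => c (σ i), fun i => r (σ i), ?_, fun i => hcA _, ⟨fun i => hrpath _, ?_⟩,
    fun i => hrA (σ i), ?_⟩
  · exact hcinj.comp σ.injective
  · intro i j hij x hx1 hx2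
    exact Or.inl (hrdisj (σ i) (σ j) (fun h => hij (σ.injective h)) x hx1 hx2)
  · intro i
    show c (σ (Fin.castLE hkn i)) = a i
    rw [hσ i, hd i]


end KS
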